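/- arXiv:2404.08868 — 8 statements merged into one kernel-verified Lean document; each statement's English description precedes it below -/
import Mathlib

section
/- For a probability distribution p on ℕ with mean 1, the Gini index G[p] = (1/2)·∑ᵢ∑ⱼ |i−j|·pᵢ·pⱼ satisfies G[p] ≤ 3·p₀ − 2·p₀² ≤ 3·p₀. -/
/-!
Since `|i - j| ≤ i + j`, with the sharper `|i - j| ≤ i + j - 2` when `i, j ≥ 1`, one gets
`∑ᵢⱼ |i - j| pᵢ pⱼ ≤ ∑ᵢⱼ (i + j) pᵢ pⱼ - 2 (∑_{n ≥ 1} pₙ)² = 2 - 2 (1 - p₀)²`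
for a distribution of mean `1`. Hence `G[p] ≤ 2 p₀ - p₀²`, which is at most `3 p₀ - 2 p₀²`
because `p₀ ≤ 1`.
-/

theorem summable_of_tsum_ne_zero {α β : Type*} [AddCommMonoid α] [TopologicalSpace α]
    {f : β → α} (h : ∑' b, f b ≠ 0) : Summable f :=
  by_contra fun hf => h (tsum_eq_zero_of_not_summable hf)

theorem tsum_tsum_le_of_le_of_hasSum {α β : Type*} {a b : α → β → ℝ} {c : α → ℝ} {t : ℝ}
    (ha : ∀ i j, 0 ≤ a i j) (hab : ∀ i j, a i j ≤ b i j) (hb : ∀ i, HasSum (b i) (c i))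
    (hc : HasSum c t) : ∑' i, ∑' j, a i j ≤ t := by
  have hac (i : α) : ∑' j, a i j ≤ c i :=
    (hb i).tsum_eq ▸ ((hb i).summable.of_nonneg_of_le (ha i) (hab i)).tsum_le_tsum (hab i)
      (hb i).summable
  have ha_summable : Summable fun i => ∑' j, a i j :=
    hc.summable.of_nonneg_of_le (fun i => tsum_nonneg (ha i)) hac
  exact hc.tsum_eq ▸ ha_summable.tsum_le_tsum hac hc.summable

theorem abs_natCast_sub_mul_mul_add_le (i j : ℕ) {x y : ℝ} (hx : 0 ≤ x) (hy : 0 ≤ y) :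
    |(i : ℝ) - j| * x * y + 2 * (if i = 0 then 0 else x) * (if j = 0 then 0 else y)
      ≤ i * x * y + x * (j * y) := by
  rcases Nat.eq_zero_or_pos i with rfl | hi <;> rcases Nat.eq_zero_or_pos j with rfl | hj
  · simp
  · simp [hj.ne', abs_of_nonneg]
    linarith
  · simp [hi.ne', abs_of_nonneg]
  · have hi' : (1 : ℝ) ≤ i := by exact_mod_cast hi
    have hj' : (1 : ℝ) ≤ j := by exact_mod_cast hj
    have habs : |(i : ℝ) - j| ≤ i + j - 2 := abs_le.mpr ⟨by linarith, by linarith⟩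
    simp only [hi.ne', hj.ne', if_false]
    nlinarith [mul_le_mul_of_nonneg_right habs (mul_nonneg hx hy)]

theorem tsum_tsum_abs_sub_mul_mul_le {p : ℕ → ℝ} {s m : ℝ} (hp : ∀ n, 0 ≤ p n)
    (hs : HasSum p s) (hm : HasSum (fun n : ℕ => (n : ℝ) * p n) m) :
    ∑' i : ℕ, ∑' j : ℕ, |(i : ℝ) - j| * p i * p j ≤ 2 * s * m - 2 * (s - p 0) ^ 2 := by
  set q : ℕ → ℝ := fun n => if n = 0 then 0 else p n
  have hq : HasSum q (s - p 0) := hasSum_ite_sub_hasSum hs 0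
  have hbound (i j : ℕ) :
      |(i : ℝ) - j| * p i * p j ≤ i * p i * p j + p i * (j * p j) - 2 * q i * q j :=
    le_sub_iff_add_le.mpr (abs_natCast_sub_mul_mul_add_le i j (hp i) (hp j))
  have hrow (i : ℕ) : HasSum (fun j => i * p i * p j + p i * (j * p j) - 2 * q i * q j)
      (i * p i * s + p i * m - 2 * q i * (s - p 0)) :=
    ((hs.mul_left _).add (hm.mul_left _)).sub (hq.mul_left _)
  have htotal : HasSum (fun i => i * p i * s + p i * m - 2 * q i * (s - p 0))
      (m * s + s * m - 2 * (s - p 0) * (s - p 0)) :=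
    ((hm.mul_right s).add (hs.mul_right m)).sub ((hq.mul_left 2).mul_right (s - p 0))
  calc ∑' i : ℕ, ∑' j : ℕ, |(i : ℝ) - j| * p i * p j
      ≤ m * s + s * m - 2 * (s - p 0) * (s - p 0) :=
        tsum_tsum_le_of_le_of_hasSum
          (fun i j => mul_nonneg (mul_nonneg (abs_nonneg _) (hp i)) (hp j)) hbound hrow htotal
    _ = 2 * s * m - 2 * (s - p 0) ^ 2 := by ring

theorem stmt_2_general (p : ℕ → ℝ) (hpos : ∀ n, 0 ≤ p n)
    (h1 : ∑' n, p n = 1) (h2 : ∑' n : ℕ, (n : ℝ) * p n = 1) :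
    (1 / 2) * ∑' i : ℕ, ∑' j : ℕ, |(i : ℝ) - (j : ℝ)| * p i * p j
      ≤ 3 * p 0 - 2 * (p 0) ^ 2 ∧ 3 * p 0 - 2 * (p 0) ^ 2 ≤ 3 * p 0 := by
  have hs : HasSum p 1 := h1 ▸ (summable_of_tsum_ne_zero (h1 ▸ one_ne_zero)).hasSum
  have hm : HasSum (fun n : ℕ => (n : ℝ) * p n) 1 :=
    h2 ▸ (summable_of_tsum_ne_zero (h2 ▸ one_ne_zero)).hasSum
  have hp0 : p 0 ≤ 1 := hs.tsum_eq ▸ hs.summable.le_tsum 0 fun n _ => hpos n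
  have hG := tsum_tsum_abs_sub_mul_mul_le hpos hs hm
  constructor <;> nlinarith [hpos 0]

/-- For a probability distribution on ℕ with mean 1, the Gini index
`G[p] = (1/2)·∑ᵢ∑ⱼ |i−j|·pᵢ·pⱼ` satisfies `G[p] ≤ 3 p₀ − 2 p₀² ≤ 3 p₀`. -/
theorem stmt_2 (p : ℕ → ℝ) (hpos : ∀ n, 0 ≤ p n)
    (hsum : Summable p) (hmom : Summable (fun n : ℕ => (n : ℝ) * p n))
    (h1 : ∑' n, p n = 1) (h2 : ∑' n : ℕ, (n : ℝ) * p n = 1)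
    (hG : Summable (fun ij : ℕ × ℕ => |(ij.1 : ℝ) - (ij.2 : ℝ)| * p ij.1 * p ij.2)) :
    (1 / 2) * ∑' i : ℕ, ∑' j : ℕ, |(i : ℝ) - (j : ℝ)| * p i * p j
      ≤ 3 * p 0 - 2 * (p 0) ^ 2 ∧ 3 * p 0 - 2 * (p 0) ^ 2 ≤ 3 * p 0 :=
  stmt_2_general p hpos h1 h2
end

section
/- For a probability distribution p on ℕ with mean μ ∈ (0,∞), the Gini index G[p] = (1/(2μ))·∑ᵢ∑ⱼ |i−j|·pᵢ·pⱼ satisfies G[p] ≥ p₀; in particular, if μ ≤ 1 then G[p] ≥ 1 − μ. -/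
/-- For a probability distribution p on ℕ with mean μ > 0, the Gini index
`G[p] = (1/(2μ))·∑ᵢ∑ⱼ |i−j|·pᵢ·pⱼ` satisfies `G[p] ≥ p₀`; in particular,
if `μ ≤ 1` then `G[p] ≥ 1 − μ`. -/
theorem stmt_3 (μ : ℝ) (hμ : 0 < μ) (p : ℕ → ℝ) (hpos : ∀ n, 0 ≤ p n)
    (hsum : Summable p) (hmom : Summable (fun n : ℕ => (n : ℝ) * p n))
    (h1 : ∑' n, p n = 1) (h2 : ∑' n : ℕ, (n : ℝ) * p n = μ)
    (hG : Summable (fun ij : ℕ × ℕ => |(ij.1 : ℝ) - (ij.2 : ℝ)| * p ij.1 * p ij.2)) :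
    (1 / (2 * μ)) * ∑' i : ℕ, ∑' j : ℕ, |(i : ℝ) - (j : ℝ)| * p i * p j ≥ p 0 ∧
    (μ ≤ 1 →
      (1 / (2 * μ)) * ∑' i : ℕ, ∑' j : ℕ, |(i : ℝ) - (j : ℝ)| * p i * p j ≥ 1 - μ) := by
  set f : ℕ × ℕ → ℝ := fun ij => |(ij.1 : ℝ) - (ij.2 : ℝ)| * p ij.1 * p ij.2 with hf
  set g1 : ℕ × ℕ → ℝ := fun ij => if ij.2 = 0 then (ij.1 : ℝ) * p ij.1 * p 0 else 0 with hg1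
  set g2 : ℕ × ℕ → ℝ := fun ij => if ij.1 = 0 then (ij.2 : ℝ) * p ij.2 * p 0 else 0 with hg2
  -- injections
  have hinj1 : Function.Injective (fun n : ℕ => ((n, 0) : ℕ × ℕ)) := by
    intro a b h; simpa using h
  have hinj2 : Function.Injective (fun n : ℕ => ((0, n) : ℕ × ℕ)) := by
    intro a b h; simpa using h
  have hsup1 : Function.support g1 ⊆ Set.range (fun n : ℕ => ((n, 0) : ℕ × ℕ)) := by
    intro ij hij
    by_cases h : ij.2 = 0
    · exact ⟨ij.1, by simp [Prod.ext_iff, h.symm]⟩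
    · simp [hg1, h] at hij
  have hsup2 : Function.support g2 ⊆ Set.range (fun n : ℕ => ((0, n) : ℕ × ℕ)) := by
    intro ij hij
    by_cases h : ij.1 = 0
    · exact ⟨ij.2, by simp [Prod.ext_iff, h.symm]⟩
    · simp [hg2, h] at hij
  have hmom' : Summable (fun n : ℕ => (n : ℝ) * p n * p 0) := hmom.mul_right _
  have hsg1 : Summable g1 := by
    rw [← hinj1.summable_iff (fun x hx => by
      by_contra hc; exact hx (hsup1 hc))]
    simpa [hg1, Function.comp_def] using hmom'
  have hsg2 : Summable g2 := by
    rw [← hinj2.summable_iff (fun x hx => by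
      by_contra hc; exact hx (hsup2 hc))]
    simpa [hg2, Function.comp_def] using hmom'
  have htg1 : ∑' ij : ℕ × ℕ, g1 ij = μ * p 0 := by
    rw [← hinj1.tsum_eq hsup1]
    have : (fun n : ℕ => g1 (n, 0)) = fun n : ℕ => (n : ℝ) * p n * p 0 := by
      funext n; simp [hg1]
    simp only [this]
    rw [tsum_mul_right, h2]
  have htg2 : ∑' ij : ℕ × ℕ, g2 ij = μ * p 0 := by
    rw [← hinj2.tsum_eq hsup2]
    have : (fun n : ℕ => g2 (0, n)) = fun n : ℕ => (n : ℝ) * p n * p 0 := by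
      funext n; simp [hg2]
    simp only [this]
    rw [tsum_mul_right, h2]
  have hle : ∀ ij : ℕ × ℕ, g1 ij + g2 ij ≤ f ij := by
    rintro ⟨i, j⟩
    simp only [hg1, hg2, hf]
    by_cases hi : i = 0
    · subst hi
      by_cases hj : j = 0
      · subst hj; simp
      · simp only [if_pos rfl, if_neg hj, Nat.cast_zero, zero_mul, zero_add, zero_sub, abs_neg]
        have : |(j : ℝ)| = (j : ℝ) := abs_of_nonneg (by positivity)
        rw [this, if_pos trivial]
        exact le_of_eq (by ring)
    · by_cases hj : j = 0
      · subst hj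
        simp only [if_pos rfl, if_neg hi, Nat.cast_zero, sub_zero, add_zero]
        have : |(i : ℝ)| = (i : ℝ) := abs_of_nonneg (by positivity)
        rw [this, if_pos trivial]
      · simp only [if_neg hi, if_neg hj, add_zero]
        have := hpos i; have := hpos j
        positivity
  have hSfactor : ∑' ij : ℕ × ℕ, f ij = ∑' i : ℕ, ∑' j : ℕ, f (i, j) :=
    Summable.tsum_prod' hG (fun i => hG.prod_factor i)
  have hStot : 2 * μ * p 0 ≤ ∑' ij : ℕ × ℕ, f ij := by
    calc 2 * μ * p 0 = μ * p 0 + μ * p 0 := by ring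
    _ = ∑' ij : ℕ × ℕ, (g1 ij + g2 ij) := by rw [Summable.tsum_add hsg1 hsg2, htg1, htg2]
    _ ≤ ∑' ij : ℕ × ℕ, f ij := Summable.tsum_le_tsum hle (hsg1.add hsg2) hG
  have key : (1 / (2 * μ)) * ∑' i : ℕ, ∑' j : ℕ, |(i : ℝ) - (j : ℝ)| * p i * p j ≥ p 0 := by
    have hS : 2 * μ * p 0 ≤ ∑' i : ℕ, ∑' j : ℕ, |(i : ℝ) - (j : ℝ)| * p i * p j := by
      rw [← hSfactor]; exact hStot
    have hmul : (1 / (2 * μ)) * (2 * μ * p 0) ≤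
        (1 / (2 * μ)) * ∑' i : ℕ, ∑' j : ℕ, |(i : ℝ) - (j : ℝ)| * p i * p j :=
      mul_le_mul_of_nonneg_left hS (by positivity)
    have e : (1 / (2 * μ)) * (2 * μ * p 0) = p 0 := by field_simp
    linarith
  have hp0 : 1 - μ ≤ p 0 := by
    have hps : Summable (fun n : ℕ => p (n + 1)) := (summable_nat_add_iff 1).2 hsum
    have hms : Summable (fun n : ℕ => ((n + 1 : ℕ) : ℝ) * p (n + 1)) :=
      (summable_nat_add_iff 1).2 hmom
    have e1 : ∑' n : ℕ, p n = p 0 + ∑' n : ℕ, p (n + 1) := Summable.tsum_eq_zero_add hsum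
    have e2 : ∑' n : ℕ, (n : ℝ) * p n = ∑' n : ℕ, ((n + 1 : ℕ) : ℝ) * p (n + 1) := by
      rw [Summable.tsum_eq_zero_add hmom]; simp
    have hle2 : ∑' n : ℕ, p (n + 1) ≤ ∑' n : ℕ, ((n + 1 : ℕ) : ℝ) * p (n + 1) := by
      apply Summable.tsum_le_tsum _ hps hms
      intro n
      have : (1 : ℝ) ≤ ((n + 1 : ℕ) : ℝ) := by exact_mod_cast Nat.one_le_iff_ne_zero.2 (by omega)
      nlinarith [hpos (n + 1)]
    have : ∑' n : ℕ, p (n + 1) ≤ μ := by rw [← h2, e2]; exact hle2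
    have h1' : p 0 = 1 - ∑' n : ℕ, p (n + 1) := by rw [← h1, e1]; ring
    linarith
  exact ⟨key, fun _ => le_trans hp0 key⟩
end

section
/- For μ ∈ (0,1) and any probability distribution p on ℕ with mean μ, the Gini index satisfies G[p] − (1−μ) ≤ 3·(μ − 1 + p₀). -/
/-!
Write `r = 1 - p₀` for the mass of `{n ≥ 1}`. For naturals `i, j ≥ 1` one has
`|i - j| ≤ i + j - 2`, so `∑ |i - j| pᵢ pⱼ ≤ ∑ (i + j) pᵢ pⱼ - 2 (∑_{n ≥ 1} pₙ)² = 2μ - 2r²`,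
i.e. `G[p] ≤ 1 - r² / μ`. Since `r ≤ ∑ n pₙ = μ`, this gives
`G[p] - (1 - μ) ≤ (μ - r)(μ + r) / μ ≤ 2 (μ - r)`.
-/

theorem hasSum_prod_mul_of_nonneg {ι ι' : Type*} {f : ι → ℝ} {g : ι' → ℝ} {a b : ℝ}
    (hf : HasSum f a) (hg : HasSum g b) (hf0 : 0 ≤ f) (hg0 : 0 ≤ g) :
    HasSum (fun x : ι × ι' => f x.1 * g x.2) (a * b) :=
  hf.mul hg (hf.summable.mul_of_nonneg hg.summable hf0 hg0)

section NatDistribution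

variable {p : ℕ → ℝ} {s m : ℝ}

theorem abs_natCast_sub_mul_mul_le (hpos : ∀ n, 0 ≤ p n) (i j : ℕ) :
    |(i : ℝ) - j| * p i * p j ≤
      ((i : ℝ) + j) * p i * p j - 2 * (ite (i = 0) 0 (p i) * ite (j = 0) 0 (p j)) := by
  rcases eq_or_ne i 0 with rfl | hi
  · simp [abs_of_nonneg]
  rcases eq_or_ne j 0 with rfl | hj
  · simp [abs_of_nonneg]
  have hi1 : (1 : ℝ) ≤ i := by exact_mod_cast Nat.one_le_iff_ne_zero.mpr hi
  have hj1 : (1 : ℝ) ≤ j := by exact_mod_cast Nat.one_le_iff_ne_zero.mpr hj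
  have habs : |(i : ℝ) - j| ≤ i + j - 2 := abs_le.mpr ⟨by linarith, by linarith⟩
  simp only [hi, hj, if_false]
  nlinarith [mul_nonneg (hpos i) (hpos j)]

theorem hasSum_add_natCast_mul_mul (hpos : ∀ n, 0 ≤ p n) (hp : HasSum p s)
    (hm : HasSum (fun n : ℕ => (n : ℝ) * p n) m) :
    HasSum (fun ij : ℕ × ℕ => ((ij.1 : ℝ) + ij.2) * p ij.1 * p ij.2) (2 * m * s) := by
  have hmom0 : 0 ≤ fun n : ℕ => (n : ℝ) * p n := fun n => mul_nonneg n.cast_nonneg (hpos n)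
  have hfst := hasSum_prod_mul_of_nonneg hm hp hmom0 hpos
  have hsnd := hasSum_prod_mul_of_nonneg hp hm hpos hmom0
  convert hfst.add hsnd using 1
  · ext ij
    ring
  · ring

theorem sub_apply_zero_le_of_hasSum (hpos : ∀ n, 0 ≤ p n) (hp : HasSum p s)
    (hm : HasSum (fun n : ℕ => (n : ℝ) * p n) m) : s - p 0 ≤ m := by
  refine hasSum_le (fun n => ?_) (hasSum_ite_sub_hasSum hp 0) hm
  rcases eq_or_ne n 0 with rfl | hn
  · simp
  · simp only [hn, if_false]
    exact le_mul_of_one_le_left (hpos n) (by exact_mod_cast Nat.one_le_iff_ne_zero.mpr hn)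

theorem summable_abs_natCast_sub_mul_mul (hpos : ∀ n, 0 ≤ p n) (hp : HasSum p s)
    (hm : HasSum (fun n : ℕ => (n : ℝ) * p n) m) :
    Summable fun ij : ℕ × ℕ => |(ij.1 : ℝ) - ij.2| * p ij.1 * p ij.2 := by
  refine (hasSum_add_natCast_mul_mul hpos hp hm).summable.of_nonneg_of_le
    (fun ij => by have := hpos ij.1; have := hpos ij.2; positivity) (fun ij => ?_)
  have := hpos ij.1
  have := hpos ij.2
  have : |(ij.1 : ℝ) - ij.2| ≤ ij.1 + ij.2 := (abs_sub _ _).trans (by simp)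
  gcongr

theorem tsum_abs_natCast_sub_mul_mul_le (hpos : ∀ n, 0 ≤ p n) (hp : HasSum p s)
    (hm : HasSum (fun n : ℕ => (n : ℝ) * p n) m) :
    ∑' ij : ℕ × ℕ, |(ij.1 : ℝ) - ij.2| * p ij.1 * p ij.2 ≤ 2 * m * s - 2 * (s - p 0) ^ 2 := by
  have hq := hasSum_ite_sub_hasSum hp 0
  have hq0 : 0 ≤ fun n : ℕ => ite (n = 0) 0 (p n) := fun n => ite_nonneg le_rfl (hpos n)
  have hqq := hasSum_prod_mul_of_nonneg hq hq hq0 hq0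
  have hbound := (hasSum_add_natCast_mul_mul hpos hp hm).sub (hqq.mul_left 2)
  have hpointwise : ∀ ij : ℕ × ℕ, |(ij.1 : ℝ) - ij.2| * p ij.1 * p ij.2 ≤
      ((ij.1 : ℝ) + ij.2) * p ij.1 * p ij.2 -
        2 * (ite (ij.1 = 0) 0 (p ij.1) * ite (ij.2 = 0) 0 (p ij.2)) :=
    fun ij => abs_natCast_sub_mul_mul_le hpos ij.1 ij.2
  exact (hasSum_le hpointwise (summable_abs_natCast_sub_mul_mul hpos hp hm).hasSum hbound).trans_eq
    (by ring)

end NatDistribution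

theorem stmt_5_general (μ : ℝ) (hμ0 : 0 < μ) (p : ℕ → ℝ) (hpos : ∀ n, 0 ≤ p n)
    (hsum : Summable p) (hmom : Summable (fun n : ℕ => (n : ℝ) * p n))
    (h1 : ∑' n, p n = 1) (h2 : ∑' n : ℕ, (n : ℝ) * p n = μ) :
    (1 / (2 * μ)) * (∑' i : ℕ, ∑' j : ℕ, |(i : ℝ) - (j : ℝ)| * p i * p j) - (1 - μ)
      ≤ 3 * (μ - 1 + p 0) := by
  have hp : HasSum p 1 := h1 ▸ hsum.hasSum
  have hm : HasSum (fun n : ℕ => (n : ℝ) * p n) μ := h2 ▸ hmom.hasSum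
  have hp0 : p 0 ≤ 1 := le_hasSum hp 0 fun n _ => hpos n
  have hr : 1 - p 0 ≤ μ := sub_apply_zero_le_of_hasSum hpos hp hm
  have hS := tsum_abs_natCast_sub_mul_mul_le hpos hp hm
  rw [← (summable_abs_natCast_sub_mul_mul hpos hp hm).tsum_prod, sub_le_iff_le_add, one_div,
    inv_mul_le_iff₀ (by positivity)]
  nlinarith [mul_nonneg (sub_nonneg.mpr hr) (sub_nonneg.mpr hp0)]

/-- For μ ∈ (0,1) and any probability distribution p on ℕ with mean μ, the Gini index
satisfies `G[p] − (1−μ) ≤ 3·(μ − 1 + p₀)`. -/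
theorem stmt_5 (μ : ℝ) (hμ0 : 0 < μ) (hμ1 : μ < 1) (p : ℕ → ℝ) (hpos : ∀ n, 0 ≤ p n)
    (hsum : Summable p) (hmom : Summable (fun n : ℕ => (n : ℝ) * p n))
    (h1 : ∑' n, p n = 1) (h2 : ∑' n : ℕ, (n : ℝ) * p n = μ)
    (hG : Summable (fun ij : ℕ × ℕ => |(ij.1 : ℝ) - (ij.2 : ℝ)| * p ij.1 * p ij.2)) :
    (1 / (2 * μ)) * (∑' i : ℕ, ∑' j : ℕ, |(i : ℝ) - (j : ℝ)| * p i * p j) - (1 - μ)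
      ≤ 3 * (μ - 1 + p 0) :=
  stmt_5_general μ hμ0 p hpos hsum hmom h1 h2
end

section
/- Let μ > 1 and p̄ be the shifted Poisson distribution p̄₀ = 0, p̄ₙ = (μ−1)^{n−1}/(n−1)!·e^{−(μ−1)} for n ≥ 1. Define the operator Q̂ by Q̂[p]₀ = −(μ−1)·p₀ and Q̂[p]ₙ = n·p_{n+1} + (μ−1)·p_{n−1} − (n−1)·pₙ − (μ−1)·pₙ for n ≥ 1. Then Q̂[p̄] = 0, i.e., p̄ is a stationary solution of the linear system. -/
/-!
Writing `λ = μ - 1`, the shifted Poisson weights satisfy the detailed-balance relation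
`n * p (n + 1) = λ * p n` for every `n` (both sides vanish at `n = 0`). The component
`Q̂[p] (n + 1)` is the difference of two instances of this relation, at `n + 1` and at `n`,
so it vanishes; `Q̂[p] 0 = -λ * p 0` vanishes because `p 0 = 0`.
-/

open Real

/-- The linear operator Q̂ of the mean-field system. -/
noncomputable def Qhat (μ : ℝ) (p : ℕ → ℝ) : ℕ → ℝ
  | 0 => -(μ - 1) * p 0
  | (n + 1) => ((n : ℝ) + 1) * p (n + 2) + (μ - 1) * p n
      - ((n : ℝ) + 1 - 1) * p (n + 1) - (μ - 1) * p (n + 1)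

theorem Qhat_eq_zero_of_balance (μ : ℝ) (p : ℕ → ℝ) (h0 : p 0 = 0)
    (hbalance : ∀ n : ℕ, (n : ℝ) * p (n + 1) = (μ - 1) * p n) (n : ℕ) :
    Qhat μ p n = 0 := by
  cases n with
  | zero => simp [Qhat, h0]
  | succ n =>
    have hn := hbalance n
    have hn1 := hbalance (n + 1)
    push_cast at hn1
    simp only [Qhat]
    linarith

theorem succ_mul_pow_div_factorial (a : ℝ) (n : ℕ) :
    ((n : ℝ) + 1) * (a ^ (n + 1) / (n + 1).factorial) = a * (a ^ n / n.factorial) := by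
  rw [Nat.factorial_succ, Nat.cast_mul, pow_succ]
  field_simp
  push_cast
  ring

theorem shifted_poisson_balance (a c : ℝ) (p : ℕ → ℝ) (h0 : p 0 = 0)
    (hsucc : ∀ n : ℕ, p (n + 1) = a ^ n / n.factorial * c) (n : ℕ) :
    (n : ℝ) * p (n + 1) = a * p n := by
  cases n with
  | zero => simp [h0]
  | succ n =>
    rw [hsucc, hsucc, ← mul_assoc, ← mul_assoc, Nat.cast_succ,
      succ_mul_pow_div_factorial]

theorem stmt_9_general (μ : ℝ)
    (pbar : ℕ → ℝ) (hbar0 : pbar 0 = 0)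
    (hbar : ∀ n : ℕ, 1 ≤ n →
      pbar n = (μ - 1) ^ (n - 1) / (n - 1).factorial * exp (-(μ - 1))) :
    ∀ n, Qhat μ pbar n = 0 := by
  have hsucc (n : ℕ) : pbar (n + 1) = (μ - 1) ^ n / n.factorial * exp (-(μ - 1)) := by
    simpa using hbar (n + 1) (Nat.le_add_left 1 n)
  exact Qhat_eq_zero_of_balance μ pbar hbar0
    (shifted_poisson_balance (μ - 1) _ pbar hbar0 hsucc)

/-- For μ > 1, the shifted Poisson distribution p̄ is stationary for Q̂: `Q̂[p̄] = 0`. -/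
theorem stmt_9 (μ : ℝ) (hμ : 1 < μ)
    (pbar : ℕ → ℝ) (hbar0 : pbar 0 = 0)
    (hbar : ∀ n : ℕ, 1 ≤ n →
      pbar n = (μ - 1) ^ (n - 1) / (n - 1).factorial * exp (-(μ - 1))) :
    ∀ n, Qhat μ pbar n = 0 :=
  stmt_9_general μ pbar hbar0 hbar
end

section
/- Suppose p is a probability distribution on ℕ with mean μ ∈ (0,1] satisfying the equilibrium conditions: n·p_{n+1} = (∑_{k≥2}(k−1)pₖ)·pₙ for all n ≥ 1, and (∑_{k≥2}(k−1)pₖ)·p₀ = 0. Then p₀ = 1−μ, p₁ = μ, and pₙ = 0 for all n ≥ 2. -/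
/-- Equilibrium for μ ∈ (0,1]: if `n·p_{n+1} = S·pₙ` for n ≥ 1 and `S·p₀ = 0`,
where `S = ∑_{k≥2}(k−1)pₖ`, then p is the Bernoulli distribution. -/
theorem stmt_12 (μ : ℝ) (hμ0 : 0 < μ) (hμ1 : μ ≤ 1) (p : ℕ → ℝ) (hpos : ∀ n, 0 ≤ p n)
    (hsum : Summable p) (hmom : Summable (fun n : ℕ => (n : ℝ) * p n))
    (hmom2 : Summable (fun n : ℕ => (n : ℝ) ^ 2 * p n))
    (h1 : ∑' n, p n = 1) (h2 : ∑' n : ℕ, (n : ℝ) * p n = μ)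
    (heq : ∀ n : ℕ, 1 ≤ n →
      (n : ℝ) * p (n + 1) = (∑' k : ℕ, ((k : ℝ) + 1) * p (k + 2)) * p n)
    (heq0 : (∑' k : ℕ, ((k : ℝ) + 1) * p (k + 2)) * p 0 = 0) :
    p 0 = 1 - μ ∧ p 1 = μ ∧ ∀ n, 2 ≤ n → p n = 0 := by
  set S : ℝ := ∑' k : ℕ, ((k : ℝ) + 1) * p (k + 2) with hSdef
  -- summability of the shifted series
  have hsumS : Summable (fun k : ℕ => ((k : ℝ) + 1) * p (k + 2)) := by
    have hA : Summable (fun k : ℕ => ((k : ℝ) + 2) * p (k + 2)) := by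
      have := (summable_nat_add_iff 2).mpr hmom
      simpa [Nat.cast_add] using this
    have hB : Summable (fun k : ℕ => p (k + 2)) := (summable_nat_add_iff 2).mpr hsum
    have := hA.sub hB
    convert this using 2 with k
    · rfl
    · ring
  -- key identity: S = μ - 1 + p 0
  have hf : Summable (fun n : ℕ => ((n : ℝ) - 1) * p n) := by
    have := hmom.sub hsum
    convert this using 2 with n
    · rfl
    · ring
  have htf : ∑' n : ℕ, ((n : ℝ) - 1) * p n = μ - 1 := by
    rw [show (fun n : ℕ => ((n : ℝ) - 1) * p n) = fun n : ℕ => (n : ℝ) * p n - p n from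
      funext fun n => by ring, Summable.tsum_sub hmom hsum, h1, h2]
  have hsplit := Summable.sum_add_tsum_nat_add 2 hf
  have hS_eq : S = μ - 1 + p 0 := by
    have : ∑' k : ℕ, ((k : ℝ) + 2 - 1) * p (k + 2) = S := by
      apply tsum_congr; intro k; push_cast; ring_nf
    rw [htf] at hsplit
    simp [Finset.sum_range_succ] at hsplit
    push_cast at hsplit
    rw [this] at hsplit
    linarith
  have hS_nonneg : 0 ≤ S :=
    tsum_nonneg fun k => mul_nonneg (by positivity) (hpos _)
  have hS : S = 0 := by
    by_contra h
    have hSpos : 0 < S := lt_of_le_of_ne hS_nonneg (Ne.symm h)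
    have hp0 : p 0 = 0 := by
      rcases mul_eq_zero.mp heq0 with h' | h'
      · exact absurd h' (ne_of_gt hSpos)
      · exact h'
    rw [hp0] at hS_eq
    linarith
  -- each tail term is zero
  have htail : ∀ k : ℕ, p (k + 2) = 0 := by
    intro k
    have hterm_le : ((k : ℝ) + 1) * p (k + 2) ≤ S := by
      apply Summable.le_tsum hsumS k
      intro j _
      exact mul_nonneg (by positivity) (hpos _)
    have hterm_ge : 0 ≤ ((k : ℝ) + 1) * p (k + 2) :=
      mul_nonneg (by positivity) (hpos _)
    have : ((k : ℝ) + 1) * p (k + 2) = 0 := le_antisymm (hS ▸ hterm_le) hterm_ge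
    have hk1 : (0:ℝ) < (k : ℝ) + 1 := by positivity
    exact (mul_eq_zero.mp this).resolve_left (ne_of_gt hk1)
  have hp0 : p 0 = 1 - μ := by
    rw [hS_eq] at hS; linarith
  refine ⟨hp0, ?_, ?_⟩
  · -- μ = ∑ n p n = p 1
    have hsplit2 := Summable.sum_add_tsum_nat_add 2 hmom
    have hzero : ∑' k : ℕ, ((k : ℝ) + 2) * p (k + 2) = 0 := by
      rw [show (fun k : ℕ => ((k : ℝ) + 2) * p (k + 2)) = fun _ => (0:ℝ) from
        funext fun k => by rw [htail k]; ring]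
      exact tsum_zero
    rw [h2] at hsplit2
    simp [Finset.sum_range_succ, hzero] at hsplit2
    linarith [hsplit2]
  · intro n hn
    obtain ⟨k, rfl⟩ := Nat.exists_eq_add_of_le hn
    rw [Nat.add_comm]
    exact htail k
end

section
/- Suppose p is a probability distribution on ℕ with mean μ > 1 satisfying the equilibrium conditions n·p_{n+1} = (∑_{k≥2}(k−1)pₖ)·pₙ for all n ≥ 1 and (∑_{k≥2}(k−1)pₖ)·p₀ = 0. Then p₀ = 0 and pₙ = (μ−1)^{n−1}/(n−1)!·e^{−(μ−1)} for all n ≥ 1. -/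
open Real

/-- Equilibrium for μ > 1: if `n·p_{n+1} = S·pₙ` for n ≥ 1 and `S·p₀ = 0`,
where `S = ∑_{k≥2}(k−1)pₖ`, then p is the shifted Poisson distribution. -/
theorem stmt_13 (μ : ℝ) (hμ : 1 < μ) (p : ℕ → ℝ) (hpos : ∀ n, 0 ≤ p n)
    (hsum : Summable p) (hmom : Summable (fun n : ℕ => (n : ℝ) * p n))
    (hmom2 : Summable (fun n : ℕ => (n : ℝ) ^ 2 * p n))
    (h1 : ∑' n, p n = 1) (h2 : ∑' n : ℕ, (n : ℝ) * p n = μ)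
    (heq : ∀ n : ℕ, 1 ≤ n →
      (n : ℝ) * p (n + 1) = (∑' k : ℕ, ((k : ℝ) + 1) * p (k + 2)) * p n)
    (heq0 : (∑' k : ℕ, ((k : ℝ) + 1) * p (k + 2)) * p 0 = 0) :
    p 0 = 0 ∧ ∀ n : ℕ, 1 ≤ n →
      p n = (μ - 1) ^ (n - 1) / (n - 1).factorial * exp (-(μ - 1)) := by
  set S := (∑' k : ℕ, ((k : ℝ) + 1) * p (k + 2)) with hSdef
  have hs1 : Summable (fun k : ℕ => p (k + 1)) := (summable_nat_add_iff 1).mpr hsum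
  have hs2 : Summable (fun k : ℕ => p (k + 2)) := (summable_nat_add_iff 2).mpr hsum
  have hm1 : Summable (fun k : ℕ => ((k : ℝ) + 1) * p (k + 1)) := by
    have h := (summable_nat_add_iff (f := fun n : ℕ => (n : ℝ) * p n) 1).mpr hmom
    refine h.congr fun k => ?_
    push_cast; ring
  have hm2 : Summable (fun k : ℕ => ((k : ℝ) + 2) * p (k + 2)) := by
    have h := (summable_nat_add_iff (f := fun n : ℕ => (n : ℝ) * p n) 2).mpr hmom
    refine h.congr fun k => ?_
    push_cast; ring
  have hSsum : Summable (fun k : ℕ => ((k : ℝ) + 1) * p (k + 2)) := by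
    have h := hm2.sub hs2
    refine h.congr fun k => ?_; ring
  -- compute sums
  have e1 : ∑' n : ℕ, p n = p 0 + (p 1 + ∑' k : ℕ, p (k + 2)) := by
    rw [Summable.tsum_eq_zero_add hsum, Summable.tsum_eq_zero_add hs1]
  have e2 : ∑' n : ℕ, (n : ℝ) * p n = p 1 + ∑' k : ℕ, ((k : ℝ) + 2) * p (k + 2) := by
    rw [Summable.tsum_eq_zero_add hmom]
    have : ∑' n : ℕ, ((n + 1 : ℕ) : ℝ) * p (n + 1) = ∑' n : ℕ, ((n : ℝ) + 1) * p (n + 1) := by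
      apply tsum_congr; intro n; push_cast; ring
    rw [this, Summable.tsum_eq_zero_add hm1]
    have : ∑' n : ℕ, ((n + 1 : ℕ) + 1 : ℝ) * p (n + 1 + 1) = ∑' n : ℕ, ((n : ℝ) + 2) * p (n + 2) := by
      apply tsum_congr; intro n; push_cast; ring_nf
    simp only [Nat.cast_zero, zero_add] at this ⊢
    rw [this]; ring
  have hSval : S = μ - 1 + p 0 := by
    have : S = (∑' k : ℕ, ((k : ℝ) + 2) * p (k + 2)) - ∑' k : ℕ, p (k + 2) := by
      rw [hSdef, ← Summable.tsum_sub hm2 hs2]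
      apply tsum_congr; intro k; ring
    rw [this]
    rw [h1] at e1
    rw [h2] at e2
    linarith
  have hSpos : 0 < S := by
    have := hpos 0
    rw [hSval]; linarith
  have hp0 : p 0 = 0 := by
    rcases mul_eq_zero.mp heq0 with h | h
    · exact absurd h (ne_of_gt hSpos)
    · exact h
  have hSμ : S = μ - 1 := by rw [hSval, hp0]; ring
  -- the recursion
  have key : ∀ n : ℕ, p (n + 1) = p 1 * S ^ n / n.factorial := by
    intro n
    induction n with
    | zero => simp
    | succ n ih =>
      have h := heq (n + 1) (by omega)
      have hn : ((n : ℝ) + 1) ≠ 0 := by positivity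
      have hpn : p (n + 2) = S * p (n + 1) / ((n : ℝ) + 1) := by
        push_cast at h
        field_simp
        linarith
      rw [hpn, ih, Nat.factorial_succ]
      push_cast
      field_simp
      ring
  -- sum the series
  have hexp : ∑' n : ℕ, p (n + 1) = p 1 * Real.exp S := by
    have : ∑' n : ℕ, p (n + 1) = ∑' n : ℕ, p 1 * (S ^ n / n.factorial) := by
      apply tsum_congr; intro n; rw [key n]; ring
    rw [this, tsum_mul_left]
    congr 1
    rw [Real.exp_eq_exp_ℝ, NormedSpace.exp_eq_tsum_div]
  have hp1 : p 1 = Real.exp (-S) := by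
    have h1' : p 1 * Real.exp S = 1 := by
      rw [Summable.tsum_eq_zero_add hsum, hp0, zero_add] at h1
      linarith [hexp]
    rw [Real.exp_neg]
    field_simp
    linarith [h1']
  refine ⟨hp0, ?_⟩
  intro n hn
  obtain ⟨m, rfl⟩ : ∃ m, n = m + 1 := ⟨n - 1, by omega⟩
  rw [key m, hp1, hSμ]
  simp only [Nat.add_sub_cancel]
  ring
end

section
/- Let μ > 1 and p̄ₙ = (μ−1)^{n−1}/(n−1)!·e^{−(μ−1)} for n ≥ 1, p̄₀ = 0. For any probability distribution p on ℕ (with the relevant sums finite), the weak Poincaré inequality holds: ∑_{n≥1} (pₙ − p̄ₙ)²/p̄ₙ ≤ p₀² + (μ−1)·∑_{n≥1} p̄ₙ·(p_{n+1}/p̄_{n+1} − pₙ/p̄ₙ)². -/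
open Real

noncomputable def psn (ν : ℝ) (n : ℕ) : ℝ := ν ^ n / n.factorial * Real.exp (-ν)
noncomputable def ptail (ν : ℝ) (N : ℕ) : ℝ := ∑' k, psn ν (k + N)

variable {ν : ℝ}

lemma psn_pos (hν : 0 < ν) (n : ℕ) : 0 < psn ν n := by unfold psn; positivity

lemma psn_summable (ν : ℝ) : Summable (psn ν) :=
  (Real.summable_pow_div_factorial ν).mul_right _

lemma ptail_summand (ν : ℝ) (N : ℕ) : Summable fun k => psn ν (k + N) :=
  (psn_summable ν).comp_injective (add_left_injective N)

-- termwise: psn ν (k+N) ≤ psn ν N * (ν^k / k!)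
lemma psn_add_le (hν : 0 < ν) (N k : ℕ) :
    psn ν (k + N) ≤ psn ν N * (ν ^ k / k.factorial) := by
  unfold psn
  rw [pow_add]
  have hdvd : (k.factorial * N.factorial : ℕ) ∣ (k + N).factorial :=
    Nat.factorial_mul_factorial_dvd_factorial_add k N
  have hle : (k.factorial * N.factorial : ℝ) ≤ ((k + N).factorial : ℝ) := by
    exact_mod_cast Nat.le_of_dvd (k + N).factorial_pos hdvd
  have h1 : (0:ℝ) < (k + N).factorial := by positivity
  have h2 : (0:ℝ) < k.factorial * N.factorial := by positivity
  have : (ν ^ k * ν ^ N) / ((k + N).factorial : ℝ) ≤ (ν ^ k * ν ^ N) / (k.factorial * N.factorial : ℝ) := by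
    apply div_le_div_of_nonneg_left (by positivity) h2 hle
  calc ν ^ k * ν ^ N / ((k + N).factorial : ℝ) * Real.exp (-ν)
      ≤ (ν ^ k * ν ^ N) / (k.factorial * N.factorial : ℝ) * Real.exp (-ν) := by
        exact mul_le_mul_of_nonneg_right this (Real.exp_nonneg _)
    _ = ν ^ N / N.factorial * Real.exp (-ν) * (ν ^ k / k.factorial) := by ring

lemma ptail_le (hν : 0 < ν) (N : ℕ) : ptail ν N ≤ Real.exp ν * psn ν N := by
  have h1 : ∑' k, psn ν (k + N) ≤ ∑' k : ℕ, psn ν N * (ν ^ k / k.factorial) := by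
    apply Summable.tsum_le_tsum (psn_add_le hν N) (ptail_summand ν N)
    exact (Real.summable_pow_div_factorial ν).mul_left _
  have h2 : ∑' k : ℕ, psn ν N * (ν ^ k / k.factorial) = psn ν N * Real.exp ν := by
    rw [tsum_mul_left, Real.exp_eq_exp_ℝ, NormedSpace.exp_eq_tsum_div]
  rw [ptail]
  exact (h1.trans_eq h2).trans_eq (mul_comm _ _)

lemma psn_tsum (ν : ℝ) : ∑' n, psn ν n = 1 := by
  unfold psn
  rw [tsum_mul_right]
  have : ∑' n : ℕ, ν ^ n / (n.factorial : ℝ) = Real.exp ν := by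
    rw [Real.exp_eq_exp_ℝ, NormedSpace.exp_eq_tsum_div]
  rw [this, ← Real.exp_add]
  simp

lemma ptail_rec (ν : ℝ) (N : ℕ) : ptail ν N = psn ν N + ptail ν (N + 1) := by
  unfold ptail
  rw [Summable.tsum_eq_zero_add (ptail_summand ν N)]
  simp only [zero_add]
  congr 1
  apply tsum_congr
  intro k
  congr 1
  omega

lemma ptail_zero : ptail ν 0 = ∑' n, psn ν n := by
  unfold ptail; simp

lemma ptail_nonneg (hν : 0 < ν) (N : ℕ) : 0 ≤ ptail ν N :=
  tsum_nonneg fun k => (psn_pos hν _).le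

lemma ptail_pos (hν : 0 < ν) (N : ℕ) : 0 < ptail ν N := by
  rw [ptail_rec]
  have := ptail_nonneg hν (N+1)
  have := psn_pos hν N
  linarith

lemma ptail_antitone (hν : 0 < ν) : Antitone (ptail ν) := by
  apply antitone_nat_of_succ_le
  intro n
  rw [ptail_rec ν n]
  have := psn_pos hν n
  linarith

lemma ptail_le_one (hν : 0 < ν) (N : ℕ) : ptail ν N ≤ 1 := by
  have h0 : ptail ν 0 = 1 := by rw [ptail_zero]; exact psn_tsum ν
  calc ptail ν N ≤ ptail ν 0 := ptail_antitone hν (Nat.zero_le N)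
    _ = 1 := h0

-- indicator function
noncomputable def chi (j n : ℕ) : ℝ := if j < n then 1 else 0

lemma chi_nonneg (j n : ℕ) : 0 ≤ chi j n := by unfold chi; positivity

lemma chi_le_one (j n : ℕ) : chi j n ≤ 1 := by
  unfold chi; split <;> norm_num

lemma abs_chi_sub_le (hν : 0 < ν) (j n : ℕ) : |chi j n - ptail ν (j+1)| ≤ 1 := by
  rw [abs_le]
  constructor
  · have := ptail_le_one hν (j+1); have := chi_nonneg j n; linarith
  · have := ptail_nonneg hν (j+1); have := chi_le_one j n; linarith

lemma summable_psn_chi (ν : ℝ) (j : ℕ) : Summable fun n => psn ν n * chi j n := by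
  apply Summable.of_norm_bounded (psn_summable ν).abs
  intro n
  rw [norm_mul, Real.norm_eq_abs, Real.norm_eq_abs]
  calc |psn ν n| * |chi j n| ≤ |psn ν n| * 1 := by
        apply mul_le_mul_of_nonneg_left _ (abs_nonneg _)
        rw [abs_le]; exact ⟨by have := chi_nonneg j n; linarith, chi_le_one j n⟩
    _ = |psn ν n| := mul_one _

lemma tsum_psn_chi (hν : 0 < ν) (j : ℕ) :
    ∑' n, psn ν n * chi j n = ptail ν (j + 1) := by
  have hs := summable_psn_chi ν j
  have := (Summable.sum_add_tsum_nat_add (f := fun n => psn ν n * chi j n) (j+1) hs).symm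
  rw [this]
  have h1 : ∑ i ∈ Finset.range (j+1), psn ν i * chi j i = 0 := by
    apply Finset.sum_eq_zero
    intro i hi
    have : ¬ (j < i) := by simp at hi; omega
    simp [chi, this]
  have h2 : ∀ i : ℕ, psn ν (i + (j+1)) * chi j (i + (j+1)) = psn ν (i + (j+1)) := by
    intro i
    have : j < i + (j+1) := by omega
    simp [chi, this]
  rw [h1, zero_add]
  unfold ptail
  exact tsum_congr h2

lemma psn_rec (ν : ℝ) (n : ℕ) : ν * psn ν n = (n + 1 : ℝ) * psn ν (n + 1) := by
  unfold psn
  rw [Nat.factorial_succ]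
  push_cast
  have h1 : (n.factorial : ℝ) ≠ 0 := Nat.cast_ne_zero.mpr n.factorial_ne_zero
  field_simp
  ring

lemma summable_mul_psn (hν : 0 < ν) : Summable (fun n : ℕ => (n : ℝ) * psn ν n) := by
  rw [← summable_nat_add_iff 1]
  have : (fun n : ℕ => ((n+1 : ℕ) : ℝ) * psn ν (n+1)) = fun n => ν * psn ν n := by
    funext n; push_cast [← psn_rec ν n]; ring
  rw [this]
  exact (psn_summable ν).mul_left ν

lemma tsum_mul_psn (hν : 0 < ν) : ∑' n : ℕ, (n : ℝ) * psn ν n = ν := by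
  rw [Summable.tsum_eq_zero_add (summable_mul_psn hν)]
  have : (fun n : ℕ => ((n+1 : ℕ) : ℝ) * psn ν (n+1)) = fun n => ν * psn ν n := by
    funext n; push_cast [← psn_rec ν n]; ring
  simp only [Nat.cast_zero, zero_mul, zero_add]
  calc ∑' n : ℕ, ((n+1 : ℕ) : ℝ) * psn ν (n+1) = ∑' n, ν * psn ν n := by rw [this]
    _ = ν * ∑' n, psn ν n := tsum_mul_left
    _ = ν := by rw [psn_tsum]; ring

lemma summable_ptail (hν : 0 < ν) : Summable (fun k : ℕ => ptail ν (k + 1)) := by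
  apply Summable.of_nonneg_of_le (fun k => ptail_nonneg hν _)
    (fun k => ptail_le hν (k+1))
  exact ((psn_summable ν).comp_injective (add_left_injective 1)).mul_left _

lemma summable_chi_fixed (ν : ℝ) (n : ℕ) : Summable fun k => psn ν n * chi k n := by
  apply summable_of_ne_finset_zero (s := Finset.range n)
  intro k hk
  have h : ¬ (k < n) := by simpa using hk
  simp [chi, h]


lemma tsum_chi_fixed (ν : ℝ) (n : ℕ) : ∑' k : ℕ, psn ν n * chi k n = (n : ℝ) * psn ν n := by
  rw [tsum_eq_sum (s := Finset.range n) ?h0]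
  case h0 =>
    intro k hk
    have h : ¬ (k < n) := by simpa using hk
    simp [chi, h]
  have h : ∀ k ∈ Finset.range n, psn ν n * chi k n = psn ν n := by
    intro k hk
    have h2 : k < n := by simpa using hk
    simp [chi, h2]
  rw [Finset.sum_congr rfl h, Finset.sum_const, Finset.card_range]
  simp [mul_comm]

lemma tsum_ptail (hν : 0 < ν) : ∑' k : ℕ, ptail ν (k + 1) = ν := by
  have key : ∑' (k : ℕ) (n : ℕ), psn ν n * chi k n = ∑' (n : ℕ) (k : ℕ), psn ν n * chi k n := by
    apply Summable.tsum_comm' (f := fun (n k : ℕ) => psn ν n * chi k n)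
    · apply (summable_prod_of_nonneg ?_).mpr
      · refine ⟨fun n => ?_, ?_⟩
        · simpa [Function.uncurry] using summable_chi_fixed ν n
        · have h : (fun n : ℕ => ∑' (k : ℕ), psn ν n * chi k n) = fun n : ℕ => (n : ℝ) * psn ν n :=
            funext (fun n => tsum_chi_fixed ν n)
          show Summable fun n : ℕ => ∑' (k : ℕ), psn ν n * chi k n
          rw [h]
          exact summable_mul_psn hν
      · intro p
        exact mul_nonneg (psn_pos hν _).le (chi_nonneg _ _)
    · intro n; exact summable_chi_fixed ν n
    · intro k; exact summable_psn_chi ν k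
  calc ∑' k : ℕ, ptail ν (k + 1) = ∑' (k : ℕ) (n : ℕ), psn ν n * chi k n := by
        apply tsum_congr; intro k; exact (tsum_psn_chi hν k).symm
    _ = ∑' (n : ℕ) (k : ℕ), psn ν n * chi k n := key
    _ = ∑' n : ℕ, (n : ℝ) * psn ν n := tsum_congr (fun m : ℕ => tsum_chi_fixed ν m)
    _ = ν := tsum_mul_psn hν

lemma summable_ptail_max (hν : 0 < ν) (j : ℕ) :
    Summable (fun k : ℕ => ptail ν (max j k + 1)) := by
  rw [← summable_nat_add_iff j]
  have h : (fun k : ℕ => ptail ν (max j (k + j) + 1)) = fun k => ptail ν ((k + j) + 1) := by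
    funext k
    congr 2
    omega
  rw [h]
  exact (summable_ptail hν).comp_injective (add_left_injective j)

lemma tsum_ptail_max (hν : 0 < ν) (j : ℕ) :
    ∑' k : ℕ, ptail ν (max j k + 1) = ν * (ptail ν (j + 1) + psn ν j) := by
  induction j with
  | zero =>
    have h : (fun k : ℕ => ptail ν (max 0 k + 1)) = fun k => ptail ν (k + 1) := by
      funext k; simp
    rw [h, tsum_ptail hν]
    have h2 : ptail ν 0 = 1 := by rw [ptail_zero, psn_tsum]
    have h3 := ptail_rec ν 0
    rw [h3] at h2
    rw [show ptail ν (0 + 1) + psn ν 0 = 1 from by linarith, mul_one]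
  | succ j ih =>
    have hg : Summable (fun k : ℕ => if k < j + 1 then -psn ν (j+1) else 0) := by
      apply summable_of_ne_finset_zero (s := Finset.range (j+1))
      intro k hk
      have h : ¬ (k < j + 1) := by simpa using hk
      simp [h]
    have hpt : ptail ν (j + 2) = ptail ν (j+1) - psn ν (j+1) := by
      have := ptail_rec ν (j+1)
      linarith
    have hpw : (fun k : ℕ => ptail ν (max (j+1) k + 1))
        = fun k => ptail ν (max j k + 1) + (if k < j + 1 then -psn ν (j+1) else 0) := by
      funext k
      by_cases h : k < j + 1
      · have h1 : max (j+1) k = j + 1 := by omega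
        have h2 : max j k = j := by omega
        simp only [h1, h2, if_pos h]
        rw [hpt]
        ring
      · have h1 : max (j+1) k = k := by omega
        have h2 : max j k = k := by omega
        simp only [h1, h2, if_neg h]
        ring
    rw [hpw, Summable.tsum_add (summable_ptail_max hν j) hg, ih]
    have hgval : ∑' k : ℕ, (if k < j + 1 then -psn ν (j+1) else 0) = -((j+1 : ℝ) * psn ν (j+1)) := by
      rw [tsum_eq_sum (s := Finset.range (j+1)) ?h0]
      case h0 =>
        intro k hk
        have h : ¬ (k < j + 1) := by simpa using hk
        simp [h]
      have h : ∀ k ∈ Finset.range (j+1), (if k < j + 1 then -psn ν (j+1) else 0) = -psn ν (j+1) := by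
        intro k hk
        have h2 : k < j + 1 := by simpa using hk
        simp [h2]
      rw [Finset.sum_congr rfl h, Finset.sum_const, Finset.card_range]
      push_cast
      ring
    rw [hgval, hpt]
    have hrec := psn_rec ν j
    push_cast at hrec ⊢
    linarith

lemma tsum_B (hν : 0 < ν) (j : ℕ) :
    ∑' k : ℕ, (ptail ν (max j k + 1) - ptail ν (j+1) * ptail ν (k+1)) = ν * psn ν j := by
  rw [Summable.tsum_sub (summable_ptail_max hν j) ((summable_ptail hν).mul_left _),
    tsum_mul_left, tsum_ptail_max hν j, tsum_ptail hν]
  ring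

lemma chi_mul_chi (j k n : ℕ) : chi j n * chi k n = chi (max j k) n := by
  unfold chi
  by_cases h1 : j < n <;> by_cases h2 : k < n
  · have h3 : max j k < n := by omega
    simp [h1, h2, h3]
  · have h3 : ¬ (max j k < n) := by omega
    simp [h1, h2, h3]
  · have h3 : ¬ (max j k < n) := by omega
    simp [h1, h2, h3]
  · have h3 : ¬ (max j k < n) := by omega
    simp [h1, h2, h3]

lemma tsum_gg (hν : 0 < ν) (j k : ℕ) :
    ∑' n, psn ν n * (chi j n - ptail ν (j+1)) * (chi k n - ptail ν (k+1))
      = ptail ν (max j k + 1) - ptail ν (j+1) * ptail ν (k+1) := by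
  have hpw : ∀ n, psn ν n * (chi j n - ptail ν (j+1)) * (chi k n - ptail ν (k+1))
      = (psn ν n * chi (max j k) n - ptail ν (k+1) * (psn ν n * chi j n)
          - ptail ν (j+1) * (psn ν n * chi k n))
        + (ptail ν (j+1) * ptail ν (k+1)) * psn ν n := by
    intro n
    linear_combination (psn ν n) * (chi_mul_chi j k n)
  have sA := summable_psn_chi ν (max j k)
  have sB := (summable_psn_chi ν j).mul_left (ptail ν (k+1))
  have sC := (summable_psn_chi ν k).mul_left (ptail ν (j+1))
  have sD := (psn_summable ν).mul_left (ptail ν (j+1) * ptail ν (k+1))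
  rw [tsum_congr hpw, Summable.tsum_add ((sA.sub sB).sub sC) sD, Summable.tsum_sub (sA.sub sB) sC,
    Summable.tsum_sub sA sB, tsum_mul_left, tsum_mul_left, tsum_mul_left,
    tsum_psn_chi hν, tsum_psn_chi hν, tsum_psn_chi hν, psn_tsum ν]
  ring

lemma B_nonneg (hν : 0 < ν) (j k : ℕ) :
    0 ≤ ptail ν (max j k + 1) - ptail ν (j+1) * ptail ν (k+1) := by
  rcases le_total j k with h | h
  · rw [max_eq_right h]
    nlinarith [ptail_nonneg hν (k+1), ptail_le_one hν (j+1), ptail_nonneg hν (j+1)]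
  · rw [max_eq_left h]
    nlinarith [ptail_nonneg hν (j+1), ptail_le_one hν (k+1), ptail_nonneg hν (k+1)]

lemma summable_B (hν : 0 < ν) (j : ℕ) :
    Summable fun k : ℕ => ptail ν (max j k + 1) - ptail ν (j+1) * ptail ν (k+1) :=
  (summable_ptail_max hν j).sub ((summable_ptail hν).mul_left _)

lemma amgm_mul (a b c : ℝ) (hc : 0 ≤ c) : (a * b) * c ≤ ((a ^ 2 + b ^ 2)/2) * c := by
  apply mul_le_mul_of_nonneg_right _ hc
  nlinarith [sq_nonneg (a - b)]

lemma var_le (hν : 0 < ν) (f : ℕ → ℝ) (N : ℕ) (hf : ∀ n, f n = f (min n N)) :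
    ∑' n, psn ν n * f n ^ 2 ≤ (∑' n, psn ν n * f n) ^ 2
      + ν * ∑ j ∈ Finset.range N, psn ν j * (f (j+1) - f j) ^ 2 := by
  set d : ℕ → ℝ := fun j => f (j+1) - f j with hd
  set Fb : ℕ → ℝ := fun j => ptail ν (j+1) with hFb
  set g : ℕ → ℕ → ℝ := fun j n => chi j n - Fb j with hg
  -- Step 1: representation
  have step1 : ∀ n, f n = f 0 + ∑ j ∈ Finset.range N, d j * chi j n := by
    intro n
    have h1 : ∑ j ∈ Finset.range N, d j * chi j n = ∑ j ∈ Finset.range (min N n), d j := by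
      rw [show Finset.range (min N n) = (Finset.range N).filter (· < n) by
        ext x; simp only [Finset.mem_range, Finset.mem_filter]; omega]
      rw [Finset.sum_filter]
      apply Finset.sum_congr rfl
      intro j _
      unfold chi
      by_cases h : j < n <;> simp [h]
    have h2 : ∑ j ∈ Finset.range (min N n), d j = f (min N n) - f 0 :=
      Finset.sum_range_sub f (min N n)
    rw [h1, h2]
    have h3 := hf n
    rw [min_comm N n, ← h3]
    ring
  -- bound on f
  obtain ⟨C, hC0, hC⟩ : ∃ C, 0 ≤ C ∧ ∀ n, |f n| ≤ C := by
    refine ⟨|f 0| + ∑ j ∈ Finset.range N, |d j|, by positivity, fun n => ?_⟩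
    rw [step1 n]
    refine (abs_add_le _ _).trans ?_
    gcongr
    refine (Finset.abs_sum_le_sum_abs _ _).trans ?_
    apply Finset.sum_le_sum
    intro j _
    rw [abs_mul]
    calc |d j| * |chi j n| ≤ |d j| * 1 := by
          apply mul_le_mul_of_nonneg_left _ (abs_nonneg _)
          rw [abs_le]; exact ⟨by have := chi_nonneg j n; linarith, chi_le_one j n⟩
      _ = |d j| := mul_one _
  have hsum1 : Summable (fun n => psn ν n * f n) := by
    apply Summable.of_norm_bounded ((psn_summable ν).mul_right C)
    intro n
    rw [norm_mul, Real.norm_eq_abs, Real.norm_eq_abs, abs_of_pos (psn_pos hν n)]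
    exact mul_le_mul_of_nonneg_left (hC n) (psn_pos hν n).le
  set m : ℝ := ∑' n, psn ν n * f n with hm
  -- Step 3: mean formula
  have step3 : m = f 0 + ∑ j ∈ Finset.range N, d j * Fb j := by
    have hpw : ∀ n, psn ν n * f n
        = psn ν n * f 0 + ∑ j ∈ Finset.range N, d j * (psn ν n * chi j n) := by
      intro n
      calc psn ν n * f n = psn ν n * (f 0 + ∑ j ∈ Finset.range N, d j * chi j n) := by
            rw [← step1 n]
        _ = psn ν n * f 0 + ∑ j ∈ Finset.range N, d j * (psn ν n * chi j n) := by
            rw [mul_add, Finset.mul_sum]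
            congr 1
            apply Finset.sum_congr rfl
            intro j _
            ring
    have hsa : ∀ j ∈ Finset.range N, Summable (fun n => d j * (psn ν n * chi j n)) :=
      fun j _ => (summable_psn_chi ν j).mul_left (d j)
    rw [hm, tsum_congr hpw,
      Summable.tsum_add ((psn_summable ν).mul_right (f 0)) (summable_sum hsa),
      tsum_mul_right, psn_tsum ν, one_mul, Summable.tsum_finsetSum hsa]
    congr 1
    apply Finset.sum_congr rfl
    intro j _
    rw [tsum_mul_left, tsum_psn_chi hν j]
  -- Step 4: second moment = Var + m²
  set e : ℕ → ℝ := fun n => f n - m with he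
  have estep : ∀ n, e n = ∑ j ∈ Finset.range N, d j * g j n := by
    intro n
    rw [he]
    simp only
    rw [step1 n, step3]
    have h2 : ∑ j ∈ Finset.range N, d j * g j n
        = ∑ j ∈ Finset.range N, (d j * chi j n - d j * Fb j) :=
      Finset.sum_congr rfl (fun j _ => by simp only [hg]; ring)
    rw [h2, Finset.sum_sub_distrib]
    ring
  have hCm : ∀ n, |e n| ≤ C + |m| := by
    intro n
    simp only [he]
    calc |f n - m| ≤ |f n| + |m| := by
          have := norm_sub_le (f n) m
          simpa [Real.norm_eq_abs] using this
      _ ≤ C + |m| := by linarith [hC n]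
  have se2 : Summable (fun n => psn ν n * e n ^ 2) := by
    apply Summable.of_norm_bounded ((psn_summable ν).mul_right ((C + |m|) ^ 2))
    intro n
    rw [norm_mul, Real.norm_eq_abs, Real.norm_eq_abs, abs_of_pos (psn_pos hν n)]
    apply mul_le_mul_of_nonneg_left _ (psn_pos hν n).le
    rw [abs_pow]
    have h := hCm n
    have h0 : (0:ℝ) ≤ |e n| := abs_nonneg _
    nlinarith
  have step4 : ∑' n, psn ν n * f n ^ 2
      = (∑' n, psn ν n * e n ^ 2) + m ^ 2 := by
    have hpw4 : ∀ n, psn ν n * f n ^ 2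
        = (psn ν n * e n ^ 2 + (2*m) * (psn ν n * f n)) - (m^2) * psn ν n := by
      intro n
      simp only [he]
      ring
    rw [tsum_congr hpw4,
      Summable.tsum_sub (se2.add (hsum1.mul_left (2*m))) ((psn_summable ν).mul_left (m^2)),
      Summable.tsum_add se2 (hsum1.mul_left (2*m)), tsum_mul_left, tsum_mul_left, psn_tsum ν, ← hm]
    ring
  -- Step 5: Var as double sum
  have hsgg : ∀ j k : ℕ, Summable (fun n => (d j * d k) * (psn ν n * g j n * g k n)) := by
    intro j k
    apply Summable.mul_left
    apply Summable.of_norm_bounded (psn_summable ν)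
    intro n
    rw [norm_mul, norm_mul, Real.norm_eq_abs, Real.norm_eq_abs, Real.norm_eq_abs,
      abs_of_pos (psn_pos hν n)]
    have hgj : |g j n| ≤ 1 := abs_chi_sub_le hν j n
    have hgk : |g k n| ≤ 1 := abs_chi_sub_le hν k n
    have h0j : (0:ℝ) ≤ |g j n| := abs_nonneg _
    have h0k : (0:ℝ) ≤ |g k n| := abs_nonneg _
    have hprod : |g j n| * |g k n| ≤ 1 := by nlinarith
    calc psn ν n * |g j n| * |g k n| = psn ν n * (|g j n| * |g k n|) := by ring
      _ ≤ psn ν n * 1 := mul_le_mul_of_nonneg_left hprod (psn_pos hν n).le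
      _ = psn ν n := mul_one _
  have step5 : ∑' n, psn ν n * e n ^ 2
      = ∑ j ∈ Finset.range N, ∑ k ∈ Finset.range N,
          (d j * d k) * (ptail ν (max j k + 1) - ptail ν (j+1) * ptail ν (k+1)) := by
    have hpw5 : ∀ n, psn ν n * e n ^ 2
        = ∑ j ∈ Finset.range N, ∑ k ∈ Finset.range N,
            (d j * d k) * (psn ν n * g j n * g k n) := by
      intro n
      rw [estep n, pow_two, Finset.sum_mul_sum, Finset.mul_sum]
      apply Finset.sum_congr rfl
      intro j _
      rw [Finset.mul_sum]
      apply Finset.sum_congr rfl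
      intro k _
      ring
    rw [tsum_congr hpw5,
      Summable.tsum_finsetSum (fun j _ => summable_sum (fun k _ => hsgg j k))]
    apply Finset.sum_congr rfl
    intro j _
    rw [Summable.tsum_finsetSum (fun k _ => hsgg j k)]
    apply Finset.sum_congr rfl
    intro k _
    rw [tsum_mul_left]
    congr 1
    have := tsum_gg hν j k
    simpa [hg, hFb] using this
  -- Step 6: bound double sum
  have step6 : ∑ j ∈ Finset.range N, ∑ k ∈ Finset.range N,
          (d j * d k) * (ptail ν (max j k + 1) - ptail ν (j+1) * ptail ν (k+1))
      ≤ ν * ∑ j ∈ Finset.range N, psn ν j * d j ^ 2 := by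
    set B : ℕ → ℕ → ℝ :=
      fun j k => ptail ν (max j k + 1) - ptail ν (j+1) * ptail ν (k+1) with hB
    have hBsymm : ∀ j k, B j k = B k j := by
      intro j k
      simp only [hB]
      rw [max_comm, mul_comm]
    have h1 : ∑ j ∈ Finset.range N, ∑ k ∈ Finset.range N, (d j * d k) * B j k
        ≤ ∑ j ∈ Finset.range N, ∑ k ∈ Finset.range N, ((d j ^ 2 + d k ^ 2)/2) * B j k := by
      apply Finset.sum_le_sum
      intro j _
      apply Finset.sum_le_sum
      intro k _
      exact amgm_mul (d j) (d k) (B j k) (B_nonneg hν j k)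
    have h2 : ∑ j ∈ Finset.range N, ∑ k ∈ Finset.range N, ((d j ^ 2 + d k ^ 2)/2) * B j k
        = ∑ j ∈ Finset.range N, ∑ k ∈ Finset.range N, d j ^ 2 * B j k := by
      have hs : ∑ j ∈ Finset.range N, ∑ k ∈ Finset.range N, d k ^ 2 * B j k
          = ∑ j ∈ Finset.range N, ∑ k ∈ Finset.range N, d j ^ 2 * B j k := by
        rw [Finset.sum_comm]
        apply Finset.sum_congr rfl
        intro j _
        apply Finset.sum_congr rfl
        intro k _
        rw [hBsymm k j]
      have expand : ∀ j k : ℕ, ((d j ^ 2 + d k ^ 2)/2) * B j k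
          = (d j ^ 2 * B j k)/2 + (d k ^ 2 * B j k)/2 := by
        intro j k
        ring
      have hsplit : ∑ j ∈ Finset.range N, ∑ k ∈ Finset.range N,
            (d j ^ 2 * B j k + d k ^ 2 * B j k)
          = (∑ j ∈ Finset.range N, ∑ k ∈ Finset.range N, d j ^ 2 * B j k)
            + ∑ j ∈ Finset.range N, ∑ k ∈ Finset.range N, d k ^ 2 * B j k := by
        rw [← Finset.sum_add_distrib]
        apply Finset.sum_congr rfl
        intro j _
        rw [← Finset.sum_add_distrib]
      have hdouble : ∑ j ∈ Finset.range N, ∑ k ∈ Finset.range N, ((d j ^ 2 + d k ^ 2)/2) * B j k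
          = (∑ j ∈ Finset.range N, ∑ k ∈ Finset.range N,
              (d j ^ 2 * B j k + d k ^ 2 * B j k)) / 2 := by
        rw [Finset.sum_div]
        apply Finset.sum_congr rfl
        intro j _
        rw [Finset.sum_div]
        apply Finset.sum_congr rfl
        intro k _
        ring
      rw [hdouble, hsplit, hs]
      ring
    have h3 : ∑ j ∈ Finset.range N, ∑ k ∈ Finset.range N, d j ^ 2 * B j k
        ≤ ∑ j ∈ Finset.range N, d j ^ 2 * (ν * psn ν j) := by
      apply Finset.sum_le_sum
      intro j _
      rw [← Finset.mul_sum]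
      apply mul_le_mul_of_nonneg_left _ (sq_nonneg (d j))
      have hle : ∑ k ∈ Finset.range N, B j k ≤ ∑' k, B j k :=
        Summable.sum_le_tsum (Finset.range N) (fun k _ => B_nonneg hν j k) (summable_B hν j)
      calc ∑ k ∈ Finset.range N, B j k ≤ ∑' k, B j k := hle
        _ = ν * psn ν j := tsum_B hν j
    have h4 : ∑ j ∈ Finset.range N, d j ^ 2 * (ν * psn ν j)
        = ν * ∑ j ∈ Finset.range N, psn ν j * d j ^ 2 := by
      rw [Finset.mul_sum]
      apply Finset.sum_congr rfl
      intro j _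
      ring
    calc ∑ j ∈ Finset.range N, ∑ k ∈ Finset.range N, (d j * d k) * B j k
        ≤ ∑ j ∈ Finset.range N, ∑ k ∈ Finset.range N, ((d j ^ 2 + d k ^ 2)/2) * B j k := h1
      _ = ∑ j ∈ Finset.range N, ∑ k ∈ Finset.range N, d j ^ 2 * B j k := h2
      _ ≤ ∑ j ∈ Finset.range N, d j ^ 2 * (ν * psn ν j) := h3
      _ = ν * ∑ j ∈ Finset.range N, psn ν j * d j ^ 2 := h4
  rw [step4, step5]
  have heq : ∑ j ∈ Finset.range N, psn ν j * (f (j+1) - f j) ^ 2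
      = ∑ j ∈ Finset.range N, psn ν j * d j ^ 2 := rfl
  rw [heq]
  linarith [step6]

/-- Weak Poincaré inequality for the shifted Poisson distribution p̄:
`∑_{n≥1} (pₙ − p̄ₙ)²/p̄ₙ ≤ p₀² + (μ−1)·∑_{n≥1} p̄ₙ·(p_{n+1}/p̄_{n+1} − pₙ/p̄ₙ)²`. -/
theorem stmt_14 (μ : ℝ) (hμ : 1 < μ)
    (pbar : ℕ → ℝ) (hbar0 : pbar 0 = 0)
    (hbar : ∀ n : ℕ, 1 ≤ n →
      pbar n = (μ - 1) ^ (n - 1) / (n - 1).factorial * exp (-(μ - 1)))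
    (p : ℕ → ℝ) (hpos : ∀ n, 0 ≤ p n) (hsum : Summable p) (h1 : ∑' n, p n = 1)
    (hL : Summable (fun n : ℕ => (p (n + 1) - pbar (n + 1)) ^ 2 / pbar (n + 1)))
    (hR : Summable (fun n : ℕ =>
      pbar (n + 1) * (p (n + 2) / pbar (n + 2) - p (n + 1) / pbar (n + 1)) ^ 2)) :
    ∑' n : ℕ, (p (n + 1) - pbar (n + 1)) ^ 2 / pbar (n + 1)
      ≤ (p 0) ^ 2 + (μ - 1) *
        ∑' n : ℕ, pbar (n + 1) *
          (p (n + 2) / pbar (n + 2) - p (n + 1) / pbar (n + 1)) ^ 2 := by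
  set ν : ℝ := μ - 1 with hνdef
  have hν : 0 < ν := by simp only [hνdef]; linarith
  have hpb : ∀ n : ℕ, pbar (n + 1) = psn ν n := by
    intro n
    rw [hbar (n+1) (by omega)]
    simp only [Nat.add_sub_cancel, psn]
  set h : ℕ → ℝ := fun n => p (n+1) / psn ν n - 1 with hh
  -- rewrite LHS terms
  have hLterm : ∀ n : ℕ, (p (n + 1) - pbar (n + 1)) ^ 2 / pbar (n + 1)
      = psn ν n * h n ^ 2 := by
    intro n
    rw [hpb n, hh]
    have hq := psn_pos hν n
    field_simp
  have hRterm : ∀ n : ℕ, pbar (n + 1) * (p (n + 2) / pbar (n + 2) - p (n + 1) / pbar (n + 1)) ^ 2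
      = psn ν n * (h (n+1) - h n) ^ 2 := by
    intro n
    rw [hpb n, hpb (n+1), hh]
    ring_nf
  have hL' : Summable (fun n => psn ν n * h n ^ 2) := by
    have := hL
    rwa [funext hLterm] at this
  have hR' : Summable (fun n => psn ν n * (h (n+1) - h n) ^ 2) := by
    have := hR
    rwa [funext hRterm] at this
  -- p shifted
  have hps : Summable (fun n => p (n+1)) := by
    rw [← summable_nat_add_iff 1] at hsum
    exact hsum
  have hps1 : ∑' n, p (n+1) = 1 - p 0 := by
    have := Summable.tsum_eq_zero_add hsum
    rw [h1] at this
    linarith [this]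
  -- mean
  have hqh_eq : ∀ n, psn ν n * h n = p (n+1) - psn ν n := by
    intro n
    rw [hh]
    have hq := (psn_pos hν n).ne'
    field_simp
  have hQh : Summable (fun n => psn ν n * h n) := by
    rw [funext hqh_eq]
    exact hps.sub (psn_summable ν)
  have hmean : ∑' n, psn ν n * h n = -(p 0) := by
    rw [funext hqh_eq, Summable.tsum_sub hps (psn_summable ν), hps1, psn_tsum ν]
    ring
  -- abbreviations
  set R : ℝ := ∑' n, psn ν n * (h (n+1) - h n) ^ 2 with hRdef
  -- key inequality for each N
  have key : ∀ N : ℕ, ∑ n ∈ Finset.range N, psn ν n * h n ^ 2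
      ≤ (∑' n, psn ν n * h (min n N)) ^ 2 + ν * R := by
    intro N
    set f : ℕ → ℝ := fun n => h (min n N) with hfdef
    have hfmin : ∀ n, f n = f (min n N) := by
      intro n
      simp only [hfdef]
      congr 1
      omega
    have hvar := var_le hν f N hfmin
    -- summability of psn * f^2
    have hfb : ∀ n, f n ^ 2 ≤ ∑ i ∈ Finset.range (N+1), h i ^ 2 := by
      intro n
      apply Finset.single_le_sum (f := fun i => h i ^ 2) (fun i _ => sq_nonneg _)
      simp only [Finset.mem_range]
      omega
    have hsf2 : Summable (fun n => psn ν n * f n ^ 2) := by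
      apply Summable.of_norm_bounded
        ((psn_summable ν).mul_right (∑ i ∈ Finset.range (N+1), h i ^ 2))
      intro n
      rw [Real.norm_eq_abs, abs_mul, abs_of_pos (psn_pos hν n), abs_of_nonneg (sq_nonneg _)]
      exact mul_le_mul_of_nonneg_left (hfb n) (psn_pos hν n).le
    have ha : ∑ n ∈ Finset.range N, psn ν n * h n ^ 2 ≤ ∑' n, psn ν n * f n ^ 2 := by
      have heq : ∀ n ∈ Finset.range N, psn ν n * h n ^ 2 = psn ν n * f n ^ 2 := by
        intro n hn
        simp only [Finset.mem_range] at hn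
        simp only [hfdef]
        rw [min_eq_left (by omega : n ≤ N)]
      rw [Finset.sum_congr rfl heq]
      exact Summable.sum_le_tsum (Finset.range N)
        (fun n _ => mul_nonneg (psn_pos hν n).le (sq_nonneg _)) hsf2
    have hb : ∑ j ∈ Finset.range N, psn ν j * (f (j+1) - f j) ^ 2 ≤ R := by
      have heq : ∀ j ∈ Finset.range N, psn ν j * (f (j+1) - f j) ^ 2
          = psn ν j * (h (j+1) - h j) ^ 2 := by
        intro j hj
        simp only [Finset.mem_range] at hj
        simp only [hfdef]
        rw [min_eq_left (by omega : j + 1 ≤ N), min_eq_left (by omega : j ≤ N)]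
      rw [Finset.sum_congr rfl heq, hRdef]
      exact Summable.sum_le_tsum (Finset.range N)
        (fun j _ => mul_nonneg (psn_pos hν j).le (sq_nonneg _)) hR'
    calc ∑ n ∈ Finset.range N, psn ν n * h n ^ 2 ≤ ∑' n, psn ν n * f n ^ 2 := ha
      _ ≤ (∑' n, psn ν n * f n) ^ 2 + ν * ∑ j ∈ Finset.range N, psn ν j * (f (j+1) - f j) ^ 2 :=
          hvar
      _ ≤ (∑' n, psn ν n * h (min n N)) ^ 2 + ν * R := by
          have : (∑' n, psn ν n * f n) = ∑' n, psn ν n * h (min n N) := rfl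
          rw [this]
          have := mul_le_mul_of_nonneg_left hb hν.le
          linarith
  -- limits
  have hmN : ∀ N : ℕ, ∑' n, psn ν n * h (min n N)
      = (∑ n ∈ Finset.range N, psn ν n * h n) + h N * ptail ν N := by
    intro N
    have hsf : Summable (fun n => psn ν n * h (min n N)) := by
      apply Summable.of_norm_bounded
        ((psn_summable ν).mul_right (∑ i ∈ Finset.range (N+1), |h i|))
      intro n
      rw [Real.norm_eq_abs, abs_mul, abs_of_pos (psn_pos hν n)]
      apply mul_le_mul_of_nonneg_left _ (psn_pos hν n).le
      apply Finset.single_le_sum (f := fun i => |h i|) (fun i _ => abs_nonneg _)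
      simp only [Finset.mem_range]
      omega
    rw [← Summable.sum_add_tsum_nat_add N hsf]
    congr 1
    · apply Finset.sum_congr rfl
      intro n hn
      simp only [Finset.mem_range] at hn
      rw [min_eq_left (by omega : n ≤ N)]
    · have heq : ∀ k : ℕ, psn ν (k + N) * h (min (k + N) N) = psn ν (k + N) * h N := by
        intro k
        rw [min_eq_right (by omega : N ≤ k + N)]
      rw [tsum_congr heq, tsum_mul_right]
      rw [ptail]
      ring
  -- limit argument
  have hLt : Filter.Tendsto (fun N => ∑ n ∈ Finset.range N, psn ν n * h n ^ 2)
      Filter.atTop (nhds (∑' n, psn ν n * h n ^ 2)) := hL'.hasSum.tendsto_sum_nat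
  have hmt : Filter.Tendsto (fun N => ∑ n ∈ Finset.range N, psn ν n * h n)
      Filter.atTop (nhds (-(p 0))) := by
    have := hQh.hasSum.tendsto_sum_nat
    rwa [hmean] at this
  have htail : Filter.Tendsto (fun N => h N * ptail ν N) Filter.atTop (nhds 0) := by
    have haN : Filter.Tendsto (fun N => psn ν N * h N ^ 2) Filter.atTop (nhds 0) :=
      hL'.tendsto_atTop_zero
    have hsq : Filter.Tendsto (fun N => Real.exp ν * Real.sqrt (psn ν N * h N ^ 2))
        Filter.atTop (nhds 0) := by
      have h2 : Filter.Tendsto (fun N => Real.sqrt (psn ν N * h N ^ 2))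
          Filter.atTop (nhds (Real.sqrt 0)) :=
        (Real.continuous_sqrt.continuousAt).tendsto.comp haN
      rw [Real.sqrt_zero] at h2
      simpa using h2.const_mul (Real.exp ν)
    apply squeeze_zero_norm _ hsq
    intro N
    have hp1 : psn ν N ≤ 1 := by
      have := Summable.le_tsum (psn_summable ν) N (fun i _ => (psn_pos hν i).le)
      rwa [psn_tsum ν] at this
    have hsa : Real.sqrt (psn ν N * h N ^ 2) = Real.sqrt (psn ν N) * |h N| := by
      rw [Real.sqrt_mul (psn_pos hν N).le, Real.sqrt_sq_eq_abs]
    have hsa2 : psn ν N ≤ Real.sqrt (psn ν N) := by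
      nlinarith [Real.sq_sqrt (psn_pos hν N).le, Real.sqrt_nonneg (psn ν N),
        Real.sqrt_le_sqrt hp1, Real.sqrt_one]
    calc ‖h N * ptail ν N‖ = |h N| * ptail ν N := by
          rw [Real.norm_eq_abs, abs_mul, abs_of_nonneg (ptail_nonneg hν N)]
      _ ≤ |h N| * (Real.exp ν * psn ν N) :=
          mul_le_mul_of_nonneg_left (ptail_le hν N) (abs_nonneg _)
      _ ≤ Real.exp ν * Real.sqrt (psn ν N * h N ^ 2) := by
          rw [hsa]
          have h5 := mul_le_mul_of_nonneg_left hsa2 (abs_nonneg (h N))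
          calc |h N| * (Real.exp ν * psn ν N) = Real.exp ν * (|h N| * psn ν N) := by ring
            _ ≤ Real.exp ν * (|h N| * Real.sqrt (psn ν N)) :=
                mul_le_mul_of_nonneg_left h5 (Real.exp_nonneg ν)
            _ = Real.exp ν * (Real.sqrt (psn ν N) * |h N|) := by ring
  have hmNt : Filter.Tendsto (fun N => ∑' n, psn ν n * h (min n N))
      Filter.atTop (nhds (-(p 0))) := by
    rw [funext hmN]
    have := hmt.add htail
    simpa using this
  have hRHSt : Filter.Tendsto (fun N => (∑' n, psn ν n * h (min n N)) ^ 2 + ν * R)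
      Filter.atTop (nhds ((-(p 0)) ^ 2 + ν * R)) := by
    have h2 := (hmNt.pow 2).add_const (ν * R)
    simpa using h2
  have hfinal : ∑' n, psn ν n * h n ^ 2 ≤ (-(p 0)) ^ 2 + ν * R :=
    le_of_tendsto_of_tendsto' hLt hRHSt key
  rw [tsum_congr hLterm, tsum_congr hRterm]
  have hneg : (-(p 0)) ^ 2 = p 0 ^ 2 := by ring
  rw [hneg] at hfinal
  exact hfinal
end

section
/- For a Poisson random variable Y with parameter ν > 0 and any function f : ℕ → ℝ with f(Y) square-integrable, Var[f(Y)] ≤ ν·E[(f(Y+1) − f(Y))²]. -/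
open Real

set_option maxHeartbeats 1000000
open scoped ENNReal

section aux
variable {ν : ℝ} (hν : 0 < ν) {w : ℕ → ℝ} (hw : ∀ n, w n = ν ^ n / n.factorial * exp (-ν))

include hw

lemma pw_nonneg (hν : 0 < ν) : ∀ n, 0 ≤ w n := fun n => by
  rw [hw n]; positivity

lemma pw_summable : Summable w := by
  have := (Real.summable_pow_div_factorial ν).mul_right (exp (-ν))
  exact this.congr fun n => (hw n).symm

lemma pw_tsum : ∑' n, w n = 1 := by
  have h1 : ∑' n : ℕ, ν ^ n / n.factorial = exp ν := by
    rw [Real.exp_eq_exp_ℝ, NormedSpace.exp_eq_tsum_div]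
  calc ∑' n, w n = (∑' n : ℕ, ν ^ n / n.factorial) * exp (-ν) := by
        rw [← tsum_mul_right]; exact tsum_congr fun n => hw n
    _ = 1 := by rw [h1, ← Real.exp_add]; simp

lemma pw_rec : ∀ n : ℕ, ((n : ℝ) + 1) * w (n + 1) = ν * w n := fun n => by
  rw [hw n, hw (n + 1)]
  have h1 : ((n + 1).factorial : ℝ) = (n + 1) * n.factorial := by
    rw [Nat.factorial_succ]; push_cast; ring
  have h2 : (n.factorial : ℝ) ≠ 0 := Nat.cast_ne_zero.2 n.factorial_ne_zero
  have h3 : ((n : ℝ) + 1) ≠ 0 := by positivity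
  field_simp [h1]
  rw [h1]; ring

lemma pw_mul_summable : Summable (fun n : ℕ => (n : ℝ) * w n) := by
  rw [← summable_nat_add_iff 1]
  have : (fun n : ℕ => ((n + 1 : ℕ) : ℝ) * w (n + 1)) = fun n => ν * w n := by
    funext n; push_cast; exact pw_rec hw n
  rw [this]
  exact (pw_summable hw).mul_left ν

end aux
section key
variable {ν : ℝ} {w : ℕ → ℝ} (hw : ∀ n, w n = ν ^ n / n.factorial * exp (-ν)) (hν : 0 < ν)
include hw hν

lemma pw_tail_summable (k : ℕ) : Summable (fun j : ℕ => w (k + 1 + j)) := by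
  have := (summable_nat_add_iff (k+1)).2 (pw_summable hw)
  exact this.congr fun j => by rw [add_comm j (k+1)]

lemma pw_tail_mul_summable (k : ℕ) : Summable (fun j : ℕ => ((j : ℝ) + 1) * w (k + 1 + j)) := by
  have h1 : Summable (fun j : ℕ => ((k + 1 + j : ℕ) : ℝ) * w (k + 1 + j)) := by
    have := (summable_nat_add_iff (k+1)).2 (pw_mul_summable hw)
    exact this.congr fun j => by rw [add_comm j (k+1)]
  refine Summable.of_nonneg_of_le (fun j => ?_) (fun j => ?_) h1
  · have := pw_nonneg hw hν (k + 1 + j); positivity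
  · have h := pw_nonneg hw hν (k + 1 + j)
    apply mul_le_mul_of_nonneg_right _ h
    push_cast; linarith

/-- T k = ν * w k + (ν - k) * B k -/
lemma pw_T (k : ℕ) :
    ∑' j : ℕ, ((j : ℝ) + 1) * w (k + 1 + j)
      = ν * w k + (ν - k) * ∑' j : ℕ, w (k + 1 + j) := by
  have hB := pw_tail_summable hw hν k
  have hshift : ∀ j : ℕ, ((j : ℝ) + 1) * w (k + 1 + j)
      = ν * w (k + j) - (k : ℝ) * w (k + 1 + j) := by
    intro j
    have := pw_rec hw (k + j)
    have e : k + j + 1 = k + 1 + j := by ring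
    rw [e] at this
    push_cast at this ⊢
    nlinarith [this]
  have hsum1 : Summable (fun j : ℕ => ν * w (k + j)) := by
    have := (summable_nat_add_iff k).2 (pw_summable hw)
    exact ((this.congr fun j => by rw [add_comm j k]).mul_left ν)
  calc ∑' j : ℕ, ((j : ℝ) + 1) * w (k + 1 + j)
      = ∑' j : ℕ, (ν * w (k + j) - (k : ℝ) * w (k + 1 + j)) := tsum_congr hshift
    _ = ∑' j : ℕ, ν * w (k + j) - ∑' j : ℕ, (k : ℝ) * w (k + 1 + j) :=
        Summable.tsum_sub hsum1 (hB.mul_left _)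
    _ = ν * w k + (ν - k) * ∑' j : ℕ, w (k + 1 + j) := by
        rw [tsum_mul_left, tsum_mul_left]
        have h0 : ∑' j : ℕ, w (k + j) = w k + ∑' j : ℕ, w (k + 1 + j) := by
          rw [Summable.tsum_eq_zero_add (by
            have := (summable_nat_add_iff k).2 (pw_summable hw)
            exact this.congr fun j => by rw [add_comm j k])]
          simp only [add_zero]
          congr 1
          exact tsum_congr fun j => by rw [show k + (j + 1) = k + 1 + j by ring]
        rw [h0]
        ring

/-- A k + B k = 1 -/
lemma pw_AB (k : ℕ) :
    (∑ m ∈ Finset.range (k + 1), w m) + ∑' j : ℕ, w (k + 1 + j) = 1 := by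
  have := Summable.sum_add_tsum_nat_add (f := w) (k + 1) (pw_summable hw)
  rw [pw_tsum hw] at this
  rw [← this]
  congr 1
  exact tsum_congr fun j => by rw [add_comm j (k+1)]

/-- partial first-moment: ∑_{m ≤ k} m w m = ν (A k - w k) -/
lemma pw_U (k : ℕ) :
    ∑ m ∈ Finset.range (k + 1), (m : ℝ) * w m
      = ν * ((∑ m ∈ Finset.range (k + 1), w m) - w k) := by
  rw [Finset.sum_range_succ'  (fun m => (m : ℝ) * w m)]
  simp only [Nat.cast_zero, zero_mul, add_zero]
  have : ∀ i : ℕ, ((i + 1 : ℕ) : ℝ) * w (i + 1) = ν * w i := by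
    intro i; push_cast; exact pw_rec hw i
  rw [Finset.sum_congr rfl (fun i _ => this i), ← Finset.mul_sum]
  congr 1
  rw [Finset.sum_range_succ]
  ring

/-- The key identity: S k = ν w k. -/
lemma pw_key (k : ℕ) :
    ∑ i ∈ Finset.range (k + 1), w (k - i) * ∑' j : ℕ, ((i : ℝ) + j + 1) * w (k + 1 + j)
      = ν * w k := by
  set B := ∑' j : ℕ, w (k + 1 + j) with hBdef
  set T := ∑' j : ℕ, ((j : ℝ) + 1) * w (k + 1 + j) with hTdef
  set A := ∑ m ∈ Finset.range (k + 1), w m with hAdef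
  have hinner : ∀ i : ℕ, ∑' j : ℕ, ((i : ℝ) + j + 1) * w (k + 1 + j) = T + (i : ℝ) * B := by
    intro i
    have : ∀ j : ℕ, ((i : ℝ) + j + 1) * w (k + 1 + j)
        = ((j : ℝ) + 1) * w (k + 1 + j) + (i : ℝ) * w (k + 1 + j) := fun j => by ring
    rw [tsum_congr this, Summable.tsum_add (pw_tail_mul_summable hw hν k)
      ((pw_tail_summable hw hν k).mul_left _), tsum_mul_left]
  rw [Finset.sum_congr rfl (fun i _ => by rw [hinner i])]
  have expand : ∀ i : ℕ, w (k - i) * (T + (i:ℝ) * B) = w (k-i) * T + ((i:ℝ) * w (k-i)) * B :=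
    fun i => by ring
  rw [Finset.sum_congr rfl (fun i _ => expand i), Finset.sum_add_distrib,
    ← Finset.sum_mul, ← Finset.sum_mul]
  have hrefl : ∑ i ∈ Finset.range (k + 1), w (k - i) = A := by
    rw [hAdef, ← Finset.sum_range_reflect w (k+1)]
    exact Finset.sum_congr rfl fun i _ => by congr 1
  have hrefl2 : ∑ i ∈ Finset.range (k + 1), (i : ℝ) * w (k - i)
      = (k : ℝ) * A - ν * (A - w k) := by
    rw [← pw_U hw hν k, hAdef, Finset.mul_sum, ← Finset.sum_sub_distrib]
    rw [← Finset.sum_range_reflect (fun m => (k:ℝ) * w m - (m:ℝ) * w m) (k+1)]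
    refine Finset.sum_congr rfl fun i hi => ?_
    have hik : i ≤ k := by have := Finset.mem_range.mp hi; omega
    have : k + 1 - 1 - i = k - i := by omega
    rw [this]
    have : ((k - i : ℕ) : ℝ) = (k : ℝ) - i := by
      rw [Nat.cast_sub hik]
    rw [this]
    ring
  rw [hrefl, hrefl2]
  have hT : T = ν * w k + (ν - k) * B := pw_T hw hν k
  have hAB : A + B = 1 := pw_AB hw hν k
  rw [hT]
  have hA1 : A = 1 - B := by linarith
  rw [hA1]; ring

end key

section var
variable {ν : ℝ} {w : ℕ → ℝ} {f : ℕ → ℝ}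
  (hw : ∀ n, w n = ν ^ n / n.factorial * exp (-ν)) (hν : 0 < ν)
  (hf2 : Summable (fun n => w n * (f n) ^ 2))
include hw hν hf2

lemma pwf_summable : Summable (fun n => w n * f n) := by
  refine Summable.of_abs (Summable.of_nonneg_of_le (fun n => abs_nonneg _) (fun n => ?_)
    (((pw_summable hw).add hf2).mul_left (1/2 : ℝ)))
  have hwn := pw_nonneg hw hν n
  rw [abs_mul, abs_of_nonneg hwn]
  have h2 : 2 * |f n| ≤ 1 + f n ^ 2 := by nlinarith [sq_nonneg (|f n| - 1), sq_abs (f n)]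
  nlinarith [abs_nonneg (f n)]

lemma pvar_eq :
    ∑' n, w n * (f n - ∑' m, w m * f m) ^ 2
      = (∑' n, w n * f n ^ 2) - (∑' m, w m * f m) ^ 2 := by
  set μ := ∑' m, w m * f m with hμ
  have h3 := pw_summable hw
  have h2 := pwf_summable hw hν hf2
  have hexp : ∀ n, w n * (f n - μ) ^ 2
      = w n * f n ^ 2 - (2 * μ) * (w n * f n) + μ ^ 2 * w n := fun n => by ring
  rw [tsum_congr hexp]
  rw [Summable.tsum_add (hf2.sub (h2.mul_left _)) (h3.mul_left _), Summable.tsum_sub hf2 (h2.mul_left _),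
    tsum_mul_left, tsum_mul_left, pw_tsum hw, ← hμ]
  ring

lemma ppair_summable :
    Summable (fun p : ℕ × ℕ => w p.1 * w p.2 * (f p.2 - f p.1) ^ 2) := by
  have h3 := pw_summable hw
  have hnn : ∀ n, 0 ≤ w n := pw_nonneg hw hν
  have hb1 : Summable (fun p : ℕ × ℕ => w p.1 * (w p.2 * f p.2 ^ 2)) :=
    h3.mul_of_nonneg hf2 hnn (fun n => mul_nonneg (hnn n) (sq_nonneg _))
  have hb2 : Summable (fun p : ℕ × ℕ => (w p.1 * f p.1 ^ 2) * w p.2) :=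
    hf2.mul_of_nonneg h3 (fun n => mul_nonneg (hnn n) (sq_nonneg _)) hnn
  refine Summable.of_nonneg_of_le
    (fun p => mul_nonneg (mul_nonneg (hnn _) (hnn _)) (sq_nonneg _)) (fun p => ?_)
    ((hb1.add hb2).mul_left 2)
  have key : (f p.2 - f p.1) ^ 2 ≤ 2 * f p.2 ^ 2 + 2 * f p.1 ^ 2 := by
    nlinarith [sq_nonneg (f p.2 + f p.1)]
  calc w p.1 * w p.2 * (f p.2 - f p.1) ^ 2
      ≤ w p.1 * w p.2 * (2 * f p.2 ^ 2 + 2 * f p.1 ^ 2) :=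
        mul_le_mul_of_nonneg_left key (mul_nonneg (hnn _) (hnn _))
    _ = 2 * (w p.1 * (w p.2 * f p.2 ^ 2) + (w p.1 * f p.1 ^ 2) * w p.2) := by ring

lemma ppair_eq :
    ∑' p : ℕ × ℕ, w p.1 * w p.2 * (f p.2 - f p.1) ^ 2
      = 2 * ((∑' n, w n * f n ^ 2) - (∑' m, w m * f m) ^ 2) := by
  set μ := ∑' m, w m * f m with hμ
  set S2 := ∑' n, w n * f n ^ 2 with hS2
  have h3 := pw_summable hw
  have h2 := pwf_summable hw hν hf2
  have ht := ppair_summable hw hν hf2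
  rw [Summable.tsum_prod ht]
  have hinner : ∀ m, ∑' n, w m * w n * (f n - f m) ^ 2
      = S2 * w m - (2 * μ) * (w m * f m) + (w m * f m ^ 2) := by
    intro m
    have hexp : ∀ n, w m * w n * (f n - f m) ^ 2
        = w m * ((w n * f n ^ 2) - (2 * f m) * (w n * f n) + (f m ^ 2) * w n) := fun n => by ring
    rw [tsum_congr hexp, tsum_mul_left,
      Summable.tsum_add ((hf2.sub (h2.mul_left _))) (h3.mul_left _),
      Summable.tsum_sub hf2 (h2.mul_left _), tsum_mul_left, tsum_mul_left, pw_tsum hw, ← hμ, ← hS2]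
    ring
  rw [tsum_congr hinner,
    Summable.tsum_add ((h3.mul_left _).sub (h2.mul_left _)) hf2,
    Summable.tsum_sub (h3.mul_left _) (h2.mul_left _), tsum_mul_left, tsum_mul_left,
    pw_tsum hw, ← hμ, ← hS2]
  ring

lemma pR_summable :
    Summable (fun q : ℕ × ℕ => w q.1 * w (q.1 + q.2 + 1) * (f (q.1 + q.2 + 1) - f q.1) ^ 2) := by
  have ht := ppair_summable hw hν hf2
  have hinj : Function.Injective (fun q : ℕ × ℕ => (q.1, q.1 + q.2 + 1)) := by
    intro a b h
    simp only [Prod.mk.injEq] at h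
    obtain ⟨h1, h2⟩ := h
    exact Prod.ext h1 (by omega)
  exact ht.comp_injective hinj

lemma pvar_eq_R :
    ∑' n, w n * (f n - ∑' m, w m * f m) ^ 2
      = ∑' q : ℕ × ℕ, w q.1 * w (q.1 + q.2 + 1) * (f (q.1 + q.2 + 1) - f q.1) ^ 2 := by
  have ht := ppair_summable hw hν hf2
  set t : ℕ × ℕ → ℝ := fun p => w p.1 * w p.2 * (f p.2 - f p.1) ^ 2 with htdef
  set u : ℕ × ℕ → ℝ := fun p => if p.1 < p.2 then t p else 0 with hudef
  set l : ℕ × ℕ → ℝ := fun p => if p.2 < p.1 then t p else 0 with hldef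
  have hnn : ∀ n, 0 ≤ w n := pw_nonneg hw hν
  have htnn : ∀ p, 0 ≤ t p := fun p => by
    have := hnn p.1; have := hnn p.2; simp only [htdef]; positivity
  have hu : Summable u := by
    refine Summable.of_nonneg_of_le (fun p => ?_) (fun p => ?_) ht
    · by_cases h : p.1 < p.2 <;> simp [hudef, h, htnn p]
    · by_cases h : p.1 < p.2 <;> simp [hudef, h, htnn p]
  have hl : Summable l := by
    refine Summable.of_nonneg_of_le (fun p => ?_) (fun p => ?_) ht
    · by_cases h : p.2 < p.1 <;> simp [hldef, h, htnn p]
    · by_cases h : p.2 < p.1 <;> simp [hldef, h, htnn p]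
  have hsplit : ∀ p, t p = u p + l p := by
    intro p
    rcases lt_trichotomy p.1 p.2 with h | h | h
    · simp [hudef, hldef, h, not_lt.2 (le_of_lt h)]
    · simp [hudef, hldef, h, htdef]
    · simp [hudef, hldef, h, not_lt.2 (le_of_lt h)]
  have hPul : ∑' p, t p = (∑' p, u p) + ∑' p, l p := by
    rw [tsum_congr hsplit, Summable.tsum_add hu hl]
  -- upper = R
  have hU : ∑' p, u p = ∑' q : ℕ × ℕ, w q.1 * w (q.1 + q.2 + 1) * (f (q.1 + q.2 + 1) - f q.1) ^ 2 := by
    have hinj : Function.Injective (fun q : ℕ × ℕ => (q.1, q.1 + q.2 + 1)) := by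
      intro a b h
      simp only [Prod.mk.injEq] at h
      exact Prod.ext h.1 (by omega)
    have hsupp : Function.support u ⊆ Set.range (fun q : ℕ × ℕ => (q.1, q.1 + q.2 + 1)) := by
      intro p hp
      have h12 : p.1 < p.2 := by
        by_contra h
        simp [hudef, h] at hp
      exact ⟨(p.1, p.2 - p.1 - 1), Prod.ext rfl (by simp; omega)⟩
    rw [← hinj.tsum_eq hsupp]
    refine tsum_congr fun q => ?_
    simp only [hudef, htdef]
    rw [if_pos (by omega : q.1 < q.1 + q.2 + 1)]
  have hL : ∑' p, l p = ∑' q : ℕ × ℕ, w q.1 * w (q.1 + q.2 + 1) * (f (q.1 + q.2 + 1) - f q.1) ^ 2 := by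
    have hinj : Function.Injective (fun q : ℕ × ℕ => (q.1 + q.2 + 1, q.1)) := by
      intro a b h
      simp only [Prod.mk.injEq] at h
      exact Prod.ext h.2 (by omega)
    have hsupp : Function.support l ⊆ Set.range (fun q : ℕ × ℕ => (q.1 + q.2 + 1, q.1)) := by
      intro p hp
      have h12 : p.2 < p.1 := by
        by_contra h
        simp [hldef, h] at hp
      exact ⟨(p.2, p.1 - p.2 - 1), Prod.ext (by simp; omega) rfl⟩
    rw [← hinj.tsum_eq hsupp]
    refine tsum_congr fun q => ?_
    simp only [hldef, htdef]
    rw [if_pos (by omega : (q.1 + q.2 + 1, q.1).2 < (q.1 + q.2 + 1, q.1).1)]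
    ring
  have hP := ppair_eq hw hν hf2
  rw [pvar_eq hw hν hf2]
  rw [hU, hL] at hPul
  simp only [htdef] at hP hPul
  linarith
end var

section ineq
variable {ν : ℝ} {w f : ℕ → ℝ}
  (hw : ∀ n, w n = ν ^ n / n.factorial * exp (-ν)) (hν : 0 < ν)
include hw hν

lemma pw_tail_mul_summable' (k i : ℕ) :
    Summable (fun j : ℕ => ((i : ℝ) + j + 1) * w (k + 1 + j)) := by
  have := (pw_tail_mul_summable hw hν k).add ((pw_tail_summable hw hν k).mul_left (i : ℝ))
  exact this.congr fun j => by ring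

lemma pR_le (hf2 : Summable (fun n => w n * (f n) ^ 2))
    (hdf : Summable (fun n => w n * (f (n + 1) - f n) ^ 2)) :
    ∑' q : ℕ × ℕ, w q.1 * w (q.1 + q.2 + 1) * (f (q.1 + q.2 + 1) - f q.1) ^ 2
      ≤ ν * ∑' n, w n * (f (n + 1) - f n) ^ 2 := by
  classical
  have hnn := pw_nonneg hw hν
  set RHS := ∑' n, w n * (f (n + 1) - f n) ^ 2 with hRHS
  have hRHSnn : 0 ≤ RHS := tsum_nonneg fun n => mul_nonneg (hnn n) (sq_nonneg _)
  set r : ℕ × ℕ → ℝ := fun q => w q.1 * w (q.1 + q.2 + 1) * (f (q.1 + q.2 + 1) - f q.1) ^ 2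
    with hr
  have hrnn : ∀ q, 0 ≤ r q := fun q =>
    mul_nonneg (mul_nonneg (hnn _) (hnn _)) (sq_nonneg _)
  set F : ℕ → ℕ → ℕ → ℝ≥0∞ := fun m d i =>
    if i ≤ d then ENNReal.ofReal
      (w m * w (m + d + 1) * ((d : ℝ) + 1) * (f (m + i + 1) - f (m + i)) ^ 2) else 0 with hF
  set G : ℕ → ℕ → ℕ → ℝ≥0∞ := fun i j k =>
    if i ≤ k then ENNReal.ofReal
      ((w (k - i) * (f (k + 1) - f k) ^ 2) * (((i : ℝ) + j + 1) * w (k + 1 + j))) else 0 with hG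
  -- step 1 : E ≤ triple F sum
  have h1 : (∑' q : ℕ × ℕ, ENNReal.ofReal (r q)) ≤ ∑' m, ∑' d, ∑' i, F m d i := by
    rw [ENNReal.tsum_prod']
    refine ENNReal.tsum_le_tsum fun m => ENNReal.tsum_le_tsum fun d => ?_
    have htel : f (m + d + 1) - f m
        = ∑ i ∈ Finset.range (d + 1), (f (m + i + 1) - f (m + i)) := by
      have := Finset.sum_range_sub (fun i => f (m + i)) (d + 1)
      simpa [add_assoc] using this.symm
    have hcs : (f (m + d + 1) - f m) ^ 2
        ≤ ((d : ℝ) + 1) * ∑ i ∈ Finset.range (d + 1), (f (m + i + 1) - f (m + i)) ^ 2 := by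
      rw [htel]
      have := sq_sum_le_card_mul_sum_sq
        (s := Finset.range (d + 1)) (f := fun i => f (m + i + 1) - f (m + i))
      simpa using this
    have hbound : r (m, d) ≤ ∑ i ∈ Finset.range (d + 1),
        w m * w (m + d + 1) * ((d : ℝ) + 1) * (f (m + i + 1) - f (m + i)) ^ 2 := by
      have hwnn : (0:ℝ) ≤ w m * w (m + d + 1) := mul_nonneg (hnn _) (hnn _)
      calc r (m, d) ≤ w m * w (m + d + 1) *
            (((d : ℝ) + 1) * ∑ i ∈ Finset.range (d + 1), (f (m + i + 1) - f (m + i)) ^ 2) :=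
            mul_le_mul_of_nonneg_left hcs hwnn
        _ = _ := by
            rw [Finset.mul_sum, Finset.mul_sum]
            exact Finset.sum_congr rfl fun i _ => by ring
    calc ENNReal.ofReal (r (m, d))
        ≤ ENNReal.ofReal (∑ i ∈ Finset.range (d + 1),
            w m * w (m + d + 1) * ((d : ℝ) + 1) * (f (m + i + 1) - f (m + i)) ^ 2) :=
          ENNReal.ofReal_le_ofReal hbound
      _ = ∑ i ∈ Finset.range (d + 1), ENNReal.ofReal
            (w m * w (m + d + 1) * ((d : ℝ) + 1) * (f (m + i + 1) - f (m + i)) ^ 2) :=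
          ENNReal.ofReal_sum_of_nonneg fun i _ => by
            have := hnn m; have := hnn (m + d + 1); positivity
      _ = ∑' i, F m d i := by
          rw [tsum_eq_sum (s := Finset.range (d + 1)) (fun i hi => by
            simp only [hF]; rw [if_neg (show ¬ i ≤ d by simp at hi; omega)])]
          exact Finset.sum_congr rfl fun i hi => by
            simp only [hF]; rw [if_pos (show i ≤ d by simp at hi; omega)]
  -- step 2 : reindex d = i + j
  have h2 : (∑' m, ∑' d, ∑' i, F m d i) = ∑' m, ∑' i, ∑' j, F m (i + j) i := by
    refine tsum_congr fun m => ?_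
    rw [ENNReal.tsum_comm]
    refine tsum_congr fun i => ?_
    refine (Function.Injective.tsum_eq (g := fun j : ℕ => i + j)
      (add_right_injective i) (f := fun d => F m d i) ?_).symm
    intro d hd
    rcases le_or_gt i d with h | h
    · exact ⟨d - i, show i + (d - i) = d by omega⟩
    · exfalso; apply hd; simp only [hF]; rw [if_neg (by omega)]
  -- step 3 : rewrite and reindex m ↦ k = m + i
  have hFG : ∀ m i j, F m (i + j) i = G i j (m + i) := by
    intro m i j
    simp only [hF, hG]
    rw [if_pos (show i ≤ i + j by omega), if_pos (show i ≤ m + i by omega)]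
    congr 1
    have e1 : m + i - i = m := by omega
    have e2 : m + i + 1 + j = m + (i + j) + 1 := by omega
    rw [e1, e2]
    push_cast
    ring
  have h3 : (∑' m, ∑' i, ∑' j, F m (i + j) i) = ∑' k, ∑' i, ∑' j, G i j k := by
    calc ∑' m, ∑' i, ∑' j, F m (i + j) i
        = ∑' i, ∑' m, ∑' j, F m (i + j) i := ENNReal.tsum_comm
      _ = ∑' i, ∑' j, ∑' m, F m (i + j) i := tsum_congr fun i => ENNReal.tsum_comm
      _ = ∑' i, ∑' j, ∑' k, G i j k := by
          refine tsum_congr fun i => tsum_congr fun j => ?_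
          refine (tsum_congr fun m => hFG m i j).trans ?_
          refine Function.Injective.tsum_eq (g := fun m : ℕ => m + i)
            (add_left_injective i) (f := fun k => G i j k) ?_
          intro k hk
          rcases le_or_gt i k with h | h
          · exact ⟨k - i, show (k - i) + i = k by omega⟩
          · exfalso; apply hk; simp only [hG]; rw [if_neg (by omega)]
      _ = ∑' i, ∑' k, ∑' j, G i j k := tsum_congr fun i => ENNReal.tsum_comm
      _ = ∑' k, ∑' i, ∑' j, G i j k := ENNReal.tsum_comm
  -- step 4 : collapse using the key identity
  have h4 : (∑' k, ∑' i, ∑' j, G i j k)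
      = ∑' k, ENNReal.ofReal ((f (k + 1) - f k) ^ 2 * (ν * w k)) := by
    refine tsum_congr fun k => ?_
    have hinner : ∀ i, (∑' j, G i j k)
        = if i ≤ k then ENNReal.ofReal ((w (k - i) * (f (k + 1) - f k) ^ 2)
            * ∑' j : ℕ, ((i : ℝ) + j + 1) * w (k + 1 + j)) else 0 := by
      intro i
      by_cases h : i ≤ k
      · rw [if_pos h]
        have hsum : Summable (fun j : ℕ =>
            (w (k - i) * (f (k + 1) - f k) ^ 2) * (((i : ℝ) + j + 1) * w (k + 1 + j))) :=
          (pw_tail_mul_summable' hw hν k i).mul_left _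
        have hnn' : ∀ j : ℕ, 0 ≤
            (w (k - i) * (f (k + 1) - f k) ^ 2) * (((i : ℝ) + j + 1) * w (k + 1 + j)) := by
          intro j
          have := hnn (k - i); have := hnn (k + 1 + j)
          positivity
        calc ∑' j, G i j k
            = ∑' j, ENNReal.ofReal
                ((w (k - i) * (f (k + 1) - f k) ^ 2) * (((i : ℝ) + j + 1) * w (k + 1 + j))) :=
              tsum_congr fun j => by simp only [hG]; rw [if_pos h]
          _ = ENNReal.ofReal (∑' j, (w (k - i) * (f (k + 1) - f k) ^ 2)
                * (((i : ℝ) + j + 1) * w (k + 1 + j))) :=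
              (ENNReal.ofReal_tsum_of_nonneg hnn' hsum).symm
          _ = _ := by rw [tsum_mul_left]
      · rw [if_neg h]
        calc ∑' j, G i j k = ∑' _ : ℕ, (0 : ℝ≥0∞) :=
              tsum_congr fun j => by simp only [hG]; rw [if_neg h]
          _ = 0 := tsum_zero
    rw [tsum_congr hinner]
    rw [tsum_eq_sum (s := Finset.range (k + 1)) (fun i hi => by
      rw [if_neg (show ¬ i ≤ k by simp at hi; omega)])]
    have hpos : ∀ i ∈ Finset.range (k + 1), (0:ℝ) ≤ (w (k - i) * (f (k + 1) - f k) ^ 2)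
        * ∑' j : ℕ, ((i : ℝ) + j + 1) * w (k + 1 + j) := by
      intro i _
      have h1 := hnn (k - i)
      have h2 : (0:ℝ) ≤ ∑' j : ℕ, ((i : ℝ) + j + 1) * w (k + 1 + j) :=
        tsum_nonneg fun j => mul_nonneg (by positivity) (hnn _)
      positivity
    calc ∑ i ∈ Finset.range (k + 1), (if i ≤ k then ENNReal.ofReal
          ((w (k - i) * (f (k + 1) - f k) ^ 2)
            * ∑' j : ℕ, ((i : ℝ) + j + 1) * w (k + 1 + j)) else 0)
        = ∑ i ∈ Finset.range (k + 1), ENNReal.ofReal ((w (k - i) * (f (k + 1) - f k) ^ 2)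
            * ∑' j : ℕ, ((i : ℝ) + j + 1) * w (k + 1 + j)) :=
          Finset.sum_congr rfl fun i hi => by
            rw [if_pos (show i ≤ k by simp at hi; omega)]
      _ = ENNReal.ofReal (∑ i ∈ Finset.range (k + 1), (w (k - i) * (f (k + 1) - f k) ^ 2)
            * ∑' j : ℕ, ((i : ℝ) + j + 1) * w (k + 1 + j)) :=
          (ENNReal.ofReal_sum_of_nonneg hpos).symm
      _ = ENNReal.ofReal ((f (k + 1) - f k) ^ 2 * (ν * w k)) := by
          congr 1
          have hkey := pw_key hw hν k
          calc ∑ i ∈ Finset.range (k + 1), (w (k - i) * (f (k + 1) - f k) ^ 2)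
                * ∑' j : ℕ, ((i : ℝ) + j + 1) * w (k + 1 + j)
              = (f (k + 1) - f k) ^ 2 * ∑ i ∈ Finset.range (k + 1),
                  w (k - i) * ∑' j : ℕ, ((i : ℝ) + j + 1) * w (k + 1 + j) := by
                rw [Finset.mul_sum]
                exact Finset.sum_congr rfl fun i _ => by ring
            _ = (f (k + 1) - f k) ^ 2 * (ν * w k) := by rw [hkey]
  -- step 5 : final ENNReal identity
  have h5 : (∑' k, ENNReal.ofReal ((f (k + 1) - f k) ^ 2 * (ν * w k)))
      = ENNReal.ofReal (ν * RHS) := by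
    have hnn' : ∀ k : ℕ, 0 ≤ ν * (w k * (f (k + 1) - f k) ^ 2) := fun k => by
      have := hnn k; positivity
    calc ∑' k, ENNReal.ofReal ((f (k + 1) - f k) ^ 2 * (ν * w k))
        = ∑' k, ENNReal.ofReal (ν * (w k * (f (k + 1) - f k) ^ 2)) :=
          tsum_congr fun k => by rw [show (f (k + 1) - f k) ^ 2 * (ν * w k)
            = ν * (w k * (f (k + 1) - f k) ^ 2) from by ring]
      _ = ENNReal.ofReal (∑' k, ν * (w k * (f (k + 1) - f k) ^ 2)) :=
          (ENNReal.ofReal_tsum_of_nonneg hnn' (hdf.mul_left ν)).symm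
      _ = ENNReal.ofReal (ν * RHS) := by rw [tsum_mul_left, hRHS]
  -- conclude
  have hE : ENNReal.ofReal (∑' q, r q) = ∑' q, ENNReal.ofReal (r q) :=
    ENNReal.ofReal_tsum_of_nonneg hrnn (pR_summable hw hν hf2)
  have hfinal : ENNReal.ofReal (∑' q, r q) ≤ ENNReal.ofReal (ν * RHS) := by
    rw [hE]
    exact h1.trans (le_of_eq ((h2.trans h3).trans (h4.trans h5)))
  exact (ENNReal.ofReal_le_ofReal_iff (mul_nonneg hν.le hRHSnn)).mp hfinal

end ineq


/-- Poisson–Poincaré inequality: for Y ∼ Poisson(ν), ν > 0, and f : ℕ → ℝ with the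
relevant expectations finite, `Var[f(Y)] ≤ ν·E[(f(Y+1) − f(Y))²]`. Here the Poisson
weights are `w n = ν^n/n!·e^{−ν}` and expectations are written as series. -/
theorem stmt_15 (ν : ℝ) (hν : 0 < ν) (f : ℕ → ℝ)
    (w : ℕ → ℝ) (hw : ∀ n, w n = ν ^ n / n.factorial * exp (-ν))
    (hf2 : Summable (fun n => w n * (f n) ^ 2))
    (hdf : Summable (fun n => w n * (f (n + 1) - f n) ^ 2)) :
    ∑' n, w n * (f n - ∑' m, w m * f m) ^ 2
      ≤ ν * ∑' n, w n * (f (n + 1) - f n) ^ 2 := by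
  rw [pvar_eq_R hw hν hf2]
  exact pR_le hw hν hf2 hdf
end
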